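/- arXiv:2002.10542 — 8 statements merged into one kernel-verified Lean document; each statement's English description precedes it below -/
import Mathlib

section
/- Subgradient method with the Polyak step-size: if f is convex with minimizer x*, iterates x^{k+1} = x^k − γ_k g^k where g^k is a subgradient of f at x^k with ‖g^k‖ ≤ G and γ_k = (f(x^k) − f(x*))/‖g^k‖², then min_{0≤i≤k} f(x^i) − f(x*) ≤ G‖x^0 − x*‖/√(k+1). -/
open scoped RealInnerProductSpace
open Finset

/-!
Write `δₖ = f(xᵏ) − f(x*)`. The subgradient inequality at `x*` gives `δₖ ≤ ⟪gᵏ, xᵏ − x*⟫`, so the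
Polyak step decreases the squared distance to the minimizer by at least `δₖ² / ‖gᵏ‖² ≥ δₖ² / G²`.
Telescoping yields `∑_{i ≤ k} δᵢ² ≤ G² ‖x⁰ − x*‖²`, and the smallest of the `k + 1` gaps is bounded
by their root mean square.
-/

section PolyakStep

variable {E : Type*} [NormedAddCommGroup E] [InnerProductSpace ℝ E]

/-- Also true for `g = 0`, where the step and the decrease are both `0` since `δ / 0 = 0`. -/
theorem norm_sub_polyak_step_sq_le {g v : E} {δ : ℝ} (hδ : 0 ≤ δ) (hδv : δ ≤ ⟪g, v⟫) :
    ‖v - (δ / ‖g‖ ^ 2) • g‖ ^ 2 ≤ ‖v‖ ^ 2 - δ ^ 2 / ‖g‖ ^ 2 := by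
  rcases eq_or_ne g 0 with rfl | hg
  · simp
  have hg2 : 0 < ‖g‖ ^ 2 := by positivity
  have hexpand : ‖v - (δ / ‖g‖ ^ 2) • g‖ ^ 2
      = ‖v‖ ^ 2 - 2 * (δ / ‖g‖ ^ 2) * ⟪g, v⟫ + δ ^ 2 / ‖g‖ ^ 2 := by
    rw [norm_sub_sq_real, real_inner_smul_right, norm_smul, mul_pow, Real.norm_eq_abs, sq_abs,
      real_inner_comm]
    field_simp
  have hinner : 2 * (δ / ‖g‖ ^ 2) * δ ≤ 2 * (δ / ‖g‖ ^ 2) * ⟪g, v⟫ :=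
    mul_le_mul_of_nonneg_left hδv (by positivity)
  have hsq : 2 * (δ / ‖g‖ ^ 2) * δ = 2 * (δ ^ 2 / ‖g‖ ^ 2) := by ring
  linarith

theorem sq_le_mul_norm_sub_polyak_step {g v : E} {δ G : ℝ} (hδ : 0 ≤ δ) (hδv : δ ≤ ⟪g, v⟫)
    (hg : δ ≠ 0 → g ≠ 0) (hG : ‖g‖ ≤ G) :
    δ ^ 2 ≤ G ^ 2 * (‖v‖ ^ 2 - ‖v - (δ / ‖g‖ ^ 2) • g‖ ^ 2) := by
  rcases eq_or_ne g 0 with rfl | hg0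
  · obtain rfl : δ = 0 := by_contra fun hδ0 => hg hδ0 rfl
    simp
  have hg2 : 0 < ‖g‖ ^ 2 := by positivity
  have hdecrease := norm_sub_polyak_step_sq_le hδ hδv
  have hδg : δ ^ 2 ≤ ‖g‖ ^ 2 * (‖v‖ ^ 2 - ‖v - (δ / ‖g‖ ^ 2) • g‖ ^ 2) := by
    rw [← div_le_iff₀' hg2]
    linarith
  have hGg : ‖g‖ ^ 2 ≤ G ^ 2 := pow_le_pow_left₀ (norm_nonneg g) hG 2
  have hnonneg : 0 ≤ ‖v‖ ^ 2 - ‖v - (δ / ‖g‖ ^ 2) • g‖ ^ 2 := by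
    have : 0 ≤ δ ^ 2 / ‖g‖ ^ 2 := by positivity
    linarith
  exact hδg.trans (mul_le_mul_of_nonneg_right hGg hnonneg)

end PolyakStep

theorem sum_range_le_mul_of_le_mul_sub {a u : ℕ → ℝ} {c : ℝ} (hc : 0 ≤ c) (hu : ∀ n, 0 ≤ u n)
    (h : ∀ i, a i ≤ c * (u i - u (i + 1))) (n : ℕ) :
    ∑ i ∈ range n, a i ≤ c * u 0 :=
  calc ∑ i ∈ range n, a i ≤ ∑ i ∈ range n, c * (u i - u (i + 1)) := sum_le_sum fun i _ => h i
    _ = c * (u 0 - u n) := by rw [← mul_sum, sum_range_sub']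
    _ ≤ c * u 0 := mul_le_mul_of_nonneg_left (by linarith [hu n]) hc

theorem inf'_sub_le_div_sqrt_card {ι : Type*} {s : Finset ι} (hs : s.Nonempty) {a : ι → ℝ}
    {c B : ℝ} (hB : 0 ≤ B) (hc : ∀ i ∈ s, c ≤ a i) (hsum : ∑ i ∈ s, (a i - c) ^ 2 ≤ B ^ 2) :
    s.inf' hs a - c ≤ B / Real.sqrt #s := by
  have hcard : (0 : ℝ) < #s := by exact_mod_cast hs.card_pos
  have hmin : ∀ i ∈ s, (s.inf' hs a - c) ^ 2 ≤ (a i - c) ^ 2 := fun i hi =>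
    pow_le_pow_left₀ (sub_nonneg.2 (le_inf' hs a hc)) (sub_le_sub_right (inf'_le a hi) c) 2
  have hcard_mul : #s * (s.inf' hs a - c) ^ 2 ≤ B ^ 2 := by
    have := card_nsmul_le_sum s _ _ hmin
    rw [nsmul_eq_mul] at this
    exact this.trans hsum
  rw [le_div_iff₀ (Real.sqrt_pos.2 hcard)]
  refine (le_abs_self _).trans (abs_le_of_sq_le_sq ?_ hB)
  rwa [mul_pow, Real.sq_sqrt hcard.le, mul_comm]

theorem stmt3_general {d : ℕ} (f : EuclideanSpace ℝ (Fin d) → ℝ)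
    (xstar : EuclideanSpace ℝ (Fin d)) (hxstar : ∀ y, f xstar ≤ f y)
    (x g : ℕ → EuclideanSpace ℝ (Fin d))
    (hsub : ∀ k y, f y ≥ f (x k) + ⟪g k, y - x k⟫)
    (hgne : ∀ k, f (x k) ≠ f xstar → g k ≠ 0)
    (G : ℝ) (hGbound : ∀ k, ‖g k‖ ≤ G)
    (hstep : ∀ k, x (k + 1) = x k - ((f (x k) - f xstar) / ‖g k‖ ^ 2) • g k) :
    ∀ k, Finset.inf' (Finset.range (k + 1)) ⟨0, Finset.mem_range.mpr (Nat.succ_pos k)⟩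
        (fun i => f (x i)) - f xstar ≤ G * ‖x 0 - xstar‖ / Real.sqrt (k + 1) := by
  intro k
  have hG : 0 ≤ G := (norm_nonneg _).trans (hGbound 0)
  have hgap_inner : ∀ i, f (x i) - f xstar ≤ ⟪g i, x i - xstar⟫ := fun i => by
    have := hsub i xstar
    rw [inner_sub_right] at this ⊢
    linarith
  have hdescent : ∀ i, (f (x i) - f xstar) ^ 2
      ≤ G ^ 2 * (‖x i - xstar‖ ^ 2 - ‖x (i + 1) - xstar‖ ^ 2) := fun i => by
    rw [hstep, sub_right_comm]
    exact sq_le_mul_norm_sub_polyak_step (sub_nonneg.2 (hxstar _)) (hgap_inner i)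
      (fun h => hgne i (sub_ne_zero.1 h)) (hGbound i)
  have hsum : ∑ i ∈ range (k + 1), (f (x i) - f xstar) ^ 2 ≤ (G * ‖x 0 - xstar‖) ^ 2 := by
    rw [mul_pow]
    exact sum_range_le_mul_of_le_mul_sub (sq_nonneg G) (fun _ => sq_nonneg _) hdescent _
  have hmin := inf'_sub_le_div_sqrt_card nonempty_range_add_one (by positivity)
    (fun i _ => hxstar (x i)) hsum
  rwa [card_range, Nat.cast_add_one] at hmin

/-- Subgradient method with the Polyak step-size: if `f` is convex with minimizer `x*`,
`x^{k+1} = x^k − γ_k g^k` with `g^k` a subgradient of `f` at `x^k`, `‖g^k‖ ≤ G`, and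
`γ_k = (f(x^k) − f(x*))/‖g^k‖²`, then
`min_{0 ≤ i ≤ k} f(x^i) − f(x*) ≤ G ‖x^0 − x*‖ / √(k+1)`. -/
theorem stmt3 {d : ℕ} (f : EuclideanSpace ℝ (Fin d) → ℝ)
    (hf : ConvexOn ℝ Set.univ f)
    (xstar : EuclideanSpace ℝ (Fin d)) (hxstar : ∀ y, f xstar ≤ f y)
    (x g : ℕ → EuclideanSpace ℝ (Fin d))
    (hsub : ∀ k y, f y ≥ f (x k) + ⟪g k, y - x k⟫)
    (hgne : ∀ k, f (x k) ≠ f xstar → g k ≠ 0)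
    (G : ℝ) (hG : 0 < G) (hGbound : ∀ k, ‖g k‖ ≤ G)
    (hstep : ∀ k, x (k + 1) = x k - ((f (x k) - f xstar) / ‖g k‖ ^ 2) • g k) :
    ∀ k, Finset.inf' (Finset.range (k + 1)) ⟨0, Finset.mem_range.mpr (Nat.succ_pos k)⟩
        (fun i => f (x i)) - f xstar ≤ G * ‖x 0 - xstar‖ / Real.sqrt (k + 1) :=
  stmt3_general f xstar hxstar x g hsub hgne G hGbound hstep
end

section
/- One-step descent for SGD with SPS_max under convexity and strong convexity: if f_i are convex and differentiable, f = E_i[f_i] is μ-strongly convex, γ_k = min{(f_i(x^k) − f_i*)/(c‖∇f_i(x^k)‖²), γ_b} with c ≥ 1/2, and x^{k+1} = x^k − γ_k ∇f_i(x^k), then E_i‖x^{k+1} − x*‖² ≤ (1 − μ·min{1/(2cL_max), γ_b})‖x^k − x*‖² + 2γ_b σ², where σ² = E_i[f_i(x*) − f_i*] and each f_i is L_i-smooth with L_max = max_i L_i. -/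
/-!
Smoothness gives `‖∇f_i(x)‖² ≤ 2 L_i (f_i(x) − f_i*)`, so the SPS_max step `γ_i` lies
between `α = min {1/(2 c L_max), γ_b}` and `γ_b`, and `c ≥ 1/2` gives
`γ_i² ‖∇f_i‖² ≤ 2 γ_i (f_i(x^k) − f_i*)`. Expanding `‖x^k − γ_i ∇f_i − x*‖²` and using convexity
of `f_i` to trade `γ_i` for `α`, each index gives `‖x^{k+1} − x*‖² ≤ ‖x^k − x*‖²
− 2α (⟪∇f_i, x^k − x*⟫ − f_i(x^k) + f_i(x*)) + 2 γ_b (f_i(x*) − f_i*)`.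
Averaging over `i`, the bracket becomes `⟪∇f, x^k − x*⟫ − f(x^k) + f(x*) ≥ μ/2 ‖x^k − x*‖²`.
-/

open scoped RealInnerProductSpace

section Gradient

variable {E : Type*} [NormedAddCommGroup E] [InnerProductSpace ℝ E] [CompleteSpace E]

theorem HasGradientAt.hasDerivAt_comp_add_smul {f : E → ℝ} {g x v : E} {t : ℝ}
    (h : HasGradientAt f g (x + t • v)) : HasDerivAt (fun s : ℝ => f (x + s • v)) ⟪g, v⟫ t := by
  have hline : HasDerivAt (fun s : ℝ => x + s • v) v t := by
    simpa using ((hasDerivAt_id t).smul_const v).const_add x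
  have h' := h.hasFDerivAt.comp_hasDerivAt t hline
  simp only [Function.comp_def, InnerProductSpace.toDual_apply_apply] at h'
  exact h'

theorem le_add_inner_add_of_lipschitz_gradient {f : E → ℝ} {G : E → E} {L : ℝ}
    (hf : ∀ x, HasGradientAt f (G x) x) (hG : ∀ x y, ‖G x - G y‖ ≤ L * ‖x - y‖) (x y : E) :
    f y ≤ f x + ⟪G x, y - x⟫ + L / 2 * ‖y - x‖ ^ 2 := by
  set v := y - x
  have hφ (t : ℝ) : HasDerivAt (fun s : ℝ => f (x + s • v) - s * ⟪G x, v⟫)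
      (⟪G (x + t • v), v⟫ - ⟪G x, v⟫) t :=
    (hf _).hasDerivAt_comp_add_smul.sub (hasDerivAt_mul_const _)
  have hB (t : ℝ) : HasDerivAt (fun s : ℝ => f x + L / 2 * ‖v‖ ^ 2 * s ^ 2)
      (L * ‖v‖ ^ 2 * t) t := by
    refine (((hasDerivAt_pow 2 t).const_mul (L / 2 * ‖v‖ ^ 2)).const_add (f x)).congr_deriv ?_
    ring
  have bound (t : ℝ) (ht : 0 ≤ t) : ⟪G (x + t • v), v⟫ - ⟪G x, v⟫ ≤ L * ‖v‖ ^ 2 * t :=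
    calc ⟪G (x + t • v), v⟫ - ⟪G x, v⟫ = ⟪G (x + t • v) - G x, v⟫ := (inner_sub_left ..).symm
      _ ≤ ‖G (x + t • v) - G x‖ * ‖v‖ := real_inner_le_norm _ _
      _ ≤ L * ‖x + t • v - x‖ * ‖v‖ := by gcongr; exact hG _ _
      _ = L * ‖v‖ ^ 2 * t := by
        rw [add_sub_cancel_left, norm_smul, Real.norm_of_nonneg ht]; ring
  have key := image_le_of_deriv_right_le_deriv_boundary (a := 0) (b := 1)
    (fun t _ => (hφ t).continuousAt.continuousWithinAt) (fun t _ => (hφ t).hasDerivWithinAt)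
    (by simp) (fun t _ => (hB t).continuousAt.continuousWithinAt)
    (fun t _ => (hB t).hasDerivWithinAt) (fun t ht => bound t ht.1)
    (Set.right_mem_Icc.2 zero_le_one)
  simp only [one_smul, add_sub_cancel, one_mul, one_pow, mul_one, v] at key
  linarith

theorem sq_norm_le_two_mul_sub_of_lipschitz_gradient {f : E → ℝ} {G : E → E} {L m : ℝ}
    (hf : ∀ x, HasGradientAt f (G x) x) (hG : ∀ x y, ‖G x - G y‖ ≤ L * ‖x - y‖) (hL : 0 < L)
    (hm : ∀ y, m ≤ f y) (x : E) : ‖G x‖ ^ 2 ≤ 2 * L * (f x - m) := by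
  have h := le_add_inner_add_of_lipschitz_gradient hf hG x (x - L⁻¹ • G x)
  rw [sub_sub_cancel_left, inner_neg_right, norm_neg, real_inner_smul_right,
    real_inner_self_eq_norm_sq, norm_smul, Real.norm_of_nonneg (inv_nonneg.2 hL.le)] at h
  have hdrop : L / 2 * (L⁻¹ * ‖G x‖) ^ 2 - L⁻¹ * ‖G x‖ ^ 2 = -(‖G x‖ ^ 2 / (2 * L)) := by
    field_simp; ring
  have hgap : ‖G x‖ ^ 2 / (2 * L) ≤ f x - m := by linarith [hm (x - L⁻¹ • G x)]
  rwa [div_le_iff₀ (by positivity), mul_comm] at hgap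

theorem HasGradientAt.const_mul_sum {ι : Type*} {s : Finset ι} {f : ι → E → ℝ} {g : ι → E}
    {x : E} (a : ℝ) (h : ∀ i ∈ s, HasGradientAt (f i) (g i) x) :
    HasGradientAt (fun y => a * ∑ i ∈ s, f i y) (a • ∑ i ∈ s, g i) x := by
  rw [hasGradientAt_iff_hasFDerivAt, map_smul, map_sum]
  exact (HasFDerivAt.fun_sum fun i hi => (h i hi).hasFDerivAt).const_mul a

end Gradient

section SPSMax

variable {E : Type*} [NormedAddCommGroup E]

noncomputable def spsMaxStep (c γb gap : ℝ) (g : E) : ℝ := min (gap / (c * ‖g‖ ^ 2)) γb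

variable {c γb gap : ℝ} {g : E}

theorem spsMaxStep_le : spsMaxStep c γb gap g ≤ γb := min_le_right _ _

theorem min_le_spsMaxStep {L : ℝ} (hc : 0 < c) (hL : 0 < L) (hg : g ≠ 0)
    (hgap : ‖g‖ ^ 2 ≤ 2 * L * gap) : min (1 / (2 * c * L)) γb ≤ spsMaxStep c γb gap g := by
  refine min_le_min_right _ ?_
  have hg2 : 0 < ‖g‖ ^ 2 := by positivity
  rw [div_le_div_iff₀ (by positivity) (by positivity)]
  nlinarith [mul_le_mul_of_nonneg_left hgap hc.le]

theorem spsMaxStep_sq_mul_le (hc : 1 / 2 ≤ c) (hγb : 0 ≤ γb) (hgap : 0 ≤ gap) :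
    spsMaxStep c γb gap g ^ 2 * ‖g‖ ^ 2 ≤ 2 * spsMaxStep c γb gap g * gap := by
  set γ := spsMaxStep c γb gap g
  have hγ : 0 ≤ γ := le_min (by positivity) hγb
  have hγc : γ * (c * ‖g‖ ^ 2) ≤ gap :=
    mul_le_of_le_div₀ hgap (by positivity) (min_le_left _ _)
  nlinarith [mul_le_mul_of_nonneg_left hγc hγ, mul_nonneg (mul_nonneg hγ hγ) (sq_nonneg ‖g‖)]

end SPSMax

theorem norm_sub_smul_sq_le {E : Type*} [NormedAddCommGroup E] [InnerProductSpace ℝ E]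
    {g w : E} {α γ γb a b m : ℝ} (hconv : a - b ≤ ⟪g, w⟫) (hα : α ≤ γ) (hγ : γ ≤ γb) (hm : m ≤ b)
    (hquad : γ ^ 2 * ‖g‖ ^ 2 ≤ 2 * γ * (a - m)) :
    ‖w - γ • g‖ ^ 2 ≤ ‖w‖ ^ 2 - 2 * α * (⟪g, w⟫ - (a - b)) + 2 * γb * (b - m) := by
  have hexp : ‖w - γ • g‖ ^ 2 = ‖w‖ ^ 2 - 2 * γ * ⟪g, w⟫ + γ ^ 2 * ‖g‖ ^ 2 := by
    rw [norm_sub_sq_real, real_inner_smul_right, norm_smul, Real.norm_eq_abs, mul_pow, sq_abs,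
      real_inner_comm]
    ring
  rw [hexp]
  linear_combination hquad + 2 * mul_le_mul_of_nonneg_right hα (sub_nonneg.2 hconv)
    + 2 * mul_le_mul_of_nonneg_right hγ (sub_nonneg.2 hm)

theorem norm_sub_spsMaxStep_smul_sub_sq_le {E : Type*} [NormedAddCommGroup E]
    [InnerProductSpace ℝ E] [CompleteSpace E] {f : E → ℝ} {G : E → E} {L Λ m c γb : ℝ}
    (hf : ∀ x, HasGradientAt f (G x) x) (hG : ∀ x y, ‖G x - G y‖ ≤ L * ‖x - y‖) (hL : 0 < L)
    (hLΛ : L ≤ Λ) (hm : ∀ y, m ≤ f y) (hc : 1 / 2 ≤ c) (hγb : 0 ≤ γb) {x y : E}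
    (hconv : f x + ⟪G x, y - x⟫ ≤ f y) :
    ‖x - spsMaxStep c γb (f x - m) (G x) • G x - y‖ ^ 2 ≤
      ‖x - y‖ ^ 2 - 2 * min (1 / (2 * c * Λ)) γb * (⟪G x, x - y⟫ - (f x - f y))
        + 2 * γb * (f y - m) := by
  have hconv' : f x - f y ≤ ⟪G x, x - y⟫ := by
    rw [← neg_sub x y, inner_neg_right] at hconv
    linarith
  set α := min (1 / (2 * c * Λ)) γb
  have hα : 0 ≤ α := le_min (by have := hL.trans_le hLΛ; positivity) hγb
  rw [sub_right_comm]
  by_cases hg : G x = 0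
  -- the step is then the junk value `min 0 γb`, but the iterate does not move for any step
  · have hx : spsMaxStep c γb (f x - m) (G x) • G x = α • G x := by simp [hg]
    rw [hx]
    refine norm_sub_smul_sq_le hconv' le_rfl (min_le_right _ _) (hm y) ?_
    simpa [hg] using mul_nonneg (mul_nonneg zero_le_two hα) (sub_nonneg.2 (hm x))
  · have hgap := sq_norm_le_two_mul_sub_of_lipschitz_gradient hf hG hL hm x
    refine norm_sub_smul_sq_le hconv' ?_ spsMaxStep_le (hm y)
      (spsMaxStep_sq_mul_le hc hγb (sub_nonneg.2 (hm x)))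
    exact min_le_spsMaxStep (by linarith) (hL.trans_le hLΛ) hg
      (hgap.trans (by gcongr; exact sub_nonneg.2 (hm x)))

theorem stmt4_general {d n : ℕ} (hn : 0 < n)
    (f : Fin n → EuclideanSpace ℝ (Fin d) → ℝ)
    (G : Fin n → EuclideanSpace ℝ (Fin d) → EuclideanSpace ℝ (Fin d))
    (hgrad : ∀ i x, HasGradientAt (f i) (G i x) x)
    (hconv : ∀ i x y, f i y ≥ f i x + ⟪G i x, y - x⟫)
    (L : Fin n → ℝ) (hL : ∀ i, 0 < L i)
    (hsmooth : ∀ i x y, ‖G i x - G i y‖ ≤ L i * ‖x - y‖)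
    (fstar : Fin n → ℝ) (hfstar : ∀ i, IsGLB (Set.range (f i)) (fstar i))
    (F : EuclideanSpace ℝ (Fin d) → ℝ) (hF : ∀ x, F x = (1 / (n : ℝ)) * ∑ i, f i x)
    (GF : EuclideanSpace ℝ (Fin d) → EuclideanSpace ℝ (Fin d))
    (hGF : ∀ x, HasGradientAt F (GF x) x)
    (μ : ℝ)
    (hsc : ∀ x y, F y ≥ F x + ⟪GF x, y - x⟫ + μ / 2 * ‖y - x‖ ^ 2)
    (xstar : EuclideanSpace ℝ (Fin d))
    (σ2 : ℝ) (hσ2 : σ2 = (1 / (n : ℝ)) * ∑ i, (f i xstar - fstar i))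
    (c γb : ℝ) (hc : c ≥ 1 / 2) (hγb : 0 < γb)
    (Lmax : ℝ) (hLmax : Lmax = Finset.univ.sup' ⟨⟨0, hn⟩, Finset.mem_univ _⟩ L)
    (xk : EuclideanSpace ℝ (Fin d))
    (γ : Fin n → ℝ)
    (hγ : ∀ i, γ i = min ((f i xk - fstar i) / (c * ‖G i xk‖ ^ 2)) γb)
    (xnext : Fin n → EuclideanSpace ℝ (Fin d))
    (hxnext : ∀ i, xnext i = xk - γ i • G i xk) :
    (1 / (n : ℝ)) * ∑ i, ‖xnext i - xstar‖ ^ 2 ≤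
      (1 - μ * min (1 / (2 * c * Lmax)) γb) * ‖xk - xstar‖ ^ 2 + 2 * γb * σ2 := by
  set w := xk - xstar
  set α := min (1 / (2 * c * Lmax)) γb
  have hlow (i) (y) : fstar i ≤ f i y := (hfstar i).1 (Set.mem_range_self y)
  have hLle (i) : L i ≤ Lmax := hLmax ▸ Finset.le_sup' L (Finset.mem_univ i)
  have hα : 0 ≤ α := le_min (by have := (hL ⟨0, hn⟩).trans_le (hLle _); positivity) hγb.le
  have hstep (i) : ‖xnext i - xstar‖ ^ 2 ≤
      ‖w‖ ^ 2 - 2 * α * (⟪G i xk, w⟫ - (f i xk - f i xstar)) + 2 * γb * (f i xstar - fstar i) := by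
    rw [hxnext, hγ]
    exact norm_sub_spsMaxStep_smul_sub_sq_le (hgrad i) (hsmooth i) (hL i) (hLle i) (hlow i) hc
      hγb.le (hconv i xk xstar)
  have hGF_avg : GF xk = (1 / (n : ℝ)) • ∑ i, G i xk :=
    (hGF xk).unique (funext hF ▸ HasGradientAt.const_mul_sum _ fun i _ => hgrad i xk)
  have hsc_w : μ / 2 * ‖w‖ ^ 2 ≤ ⟪GF xk, w⟫ - (F xk - F xstar) := by
    have := hsc xk xstar
    rw [← neg_sub xk xstar, inner_neg_right, norm_neg] at this
    linarith
  have havg : (1 / (n : ℝ)) * ∑ i, (‖w‖ ^ 2 - 2 * α * (⟪G i xk, w⟫ - (f i xk - f i xstar))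
      + 2 * γb * (f i xstar - fstar i))
      = ‖w‖ ^ 2 - 2 * α * (⟪GF xk, w⟫ - (F xk - F xstar)) + 2 * γb * σ2 := by
    have hn' : (n : ℝ) ≠ 0 := by positivity
    rw [hGF_avg, real_inner_smul_left, sum_inner, hF, hF, hσ2]
    simp only [Finset.sum_add_distrib, Finset.sum_sub_distrib, ← Finset.mul_sum, Finset.sum_const,
      Finset.card_univ, Fintype.card_fin, nsmul_eq_mul]
    field_simp
  calc (1 / (n : ℝ)) * ∑ i, ‖xnext i - xstar‖ ^ 2
      ≤ (1 / (n : ℝ)) * ∑ i, (‖w‖ ^ 2 - 2 * α * (⟪G i xk, w⟫ - (f i xk - f i xstar))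
          + 2 * γb * (f i xstar - fstar i)) := by gcongr with i; exact hstep i
    _ ≤ (1 - μ * α) * ‖w‖ ^ 2 + 2 * γb * σ2 := by
      rw [havg]; linarith [mul_le_mul_of_nonneg_left hsc_w hα]

/-- One-step descent for SGD with `SPS_max` under convexity of the `f i` and strong
convexity of `f = E_i[f_i]`: with `γ_i = min{(f_i(x^k) − f_i*)/(c‖∇f_i(x^k)‖²), γ_b}`,
`c ≥ 1/2`, and `x^{k+1} = x^k − γ_i ∇f_i(x^k)`, one has
`E_i‖x^{k+1} − x*‖² ≤ (1 − μ min{1/(2cL_max), γ_b})‖x^k − x*‖² + 2 γ_b σ²`. -/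
theorem stmt4 {d n : ℕ} (hn : 0 < n)
    (f : Fin n → EuclideanSpace ℝ (Fin d) → ℝ)
    (G : Fin n → EuclideanSpace ℝ (Fin d) → EuclideanSpace ℝ (Fin d))
    (hgrad : ∀ i x, HasGradientAt (f i) (G i x) x)
    (hconv : ∀ i x y, f i y ≥ f i x + ⟪G i x, y - x⟫)
    (L : Fin n → ℝ) (hL : ∀ i, 0 < L i)
    (hsmooth : ∀ i x y, ‖G i x - G i y‖ ≤ L i * ‖x - y‖)
    (fstar : Fin n → ℝ) (hfstar : ∀ i, IsGLB (Set.range (f i)) (fstar i))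
    (F : EuclideanSpace ℝ (Fin d) → ℝ) (hF : ∀ x, F x = (1 / (n : ℝ)) * ∑ i, f i x)
    (GF : EuclideanSpace ℝ (Fin d) → EuclideanSpace ℝ (Fin d))
    (hGF : ∀ x, HasGradientAt F (GF x) x)
    (μ : ℝ) (hμ : 0 < μ)
    (hsc : ∀ x y, F y ≥ F x + ⟪GF x, y - x⟫ + μ / 2 * ‖y - x‖ ^ 2)
    (xstar : EuclideanSpace ℝ (Fin d)) (hxstar : ∀ y, F xstar ≤ F y)
    (σ2 : ℝ) (hσ2 : σ2 = (1 / (n : ℝ)) * ∑ i, (f i xstar - fstar i))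
    (c γb : ℝ) (hc : c ≥ 1 / 2) (hγb : 0 < γb)
    (Lmax : ℝ) (hLmax : Lmax = Finset.univ.sup' ⟨⟨0, hn⟩, Finset.mem_univ _⟩ L)
    (xk : EuclideanSpace ℝ (Fin d))
    (γ : Fin n → ℝ)
    (hγ : ∀ i, γ i = min ((f i xk - fstar i) / (c * ‖G i xk‖ ^ 2)) γb)
    (xnext : Fin n → EuclideanSpace ℝ (Fin d))
    (hxnext : ∀ i, xnext i = xk - γ i • G i xk) :
    (1 / (n : ℝ)) * ∑ i, ‖xnext i - xstar‖ ^ 2 ≤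
      (1 - μ * min (1 / (2 * c * Lmax)) γb) * ‖xk - xstar‖ ^ 2 + 2 * γb * σ2 :=
  stmt4_general hn f G hgrad hconv L hL hsmooth fstar hfstar F hF GF hGF μ hsc xstar σ2 hσ2 c γb hc
    hγb Lmax hLmax xk γ hγ xnext hxnext
end

section
/- Constant step-size SGD neighborhood via optimal objective difference: if f_i are convex and L_i-smooth, f is μ-strongly convex with minimizer x*, and x^{k+1} = x^k − γ∇f_i(x^k) with γ ≤ 1/L_max, then E‖x^k − x*‖² ≤ (1 − μγ)^k ‖x^0 − x*‖² + 2σ²/μ, where σ² = f(x*) − E_i[f_i*]. -/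
/-!
An `L`-smooth function that is bounded below satisfies `‖∇fᵢ x‖² ≤ 2L (fᵢ x - fᵢ*)`, so averaging
over `i` gives `𝔼 ‖∇fᵢ x‖² ≤ 2L (f x - f x* + σ²)`. Expanding `‖x - γ ∇fᵢ x - x*‖²` and bounding
the cross term by strong convexity, the condition `γ L ≤ 1` absorbs the `f x - f x*` terms and
leaves the one-step drift `𝔼ᵢ ‖x - γ ∇fᵢ x - x*‖² ≤ (1 - μγ) ‖x - x*‖² + 2γσ²`. As `f` is itself
`L`-smooth, `μ ≤ L`, so `1 - μγ ≥ 0` and the drift inequality unrolls along the index sequence.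
-/
open scoped RealInnerProductSpace
open Finset
open scoped BigOperators

variable {E : Type*} [NormedAddCommGroup E] [InnerProductSpace ℝ E]

theorem le_add_inner_add_sq_norm_of_lipschitz_gradient [CompleteSpace E] {f : E → ℝ} {G : E → E}
    {L : ℝ} (hf : ∀ x, HasGradientAt f (G x) x) (hG : ∀ x y, ‖G x - G y‖ ≤ L * ‖x - y‖)
    (x y : E) : f y ≤ f x + ⟪G x, y - x⟫ + L / 2 * ‖y - x‖ ^ 2 := by
  set v := y - x
  have hline (t : ℝ) : HasDerivAt (fun t : ℝ => f (x + t • v)) ⟪G (x + t • v), v⟫ t := by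
    have hpath : HasDerivAt (fun t : ℝ => x + t • v) v t := by
      simpa using ((hasDerivAt_id t).smul_const v).const_add x
    have := (hf (x + t • v)).hasFDerivAt.comp_hasDerivAt t hpath
    simp only [Function.comp_def, InnerProductSpace.toDual_apply_apply] at this
    exact this
  have hbound (t : ℝ) : HasDerivAt (fun t : ℝ => f x + t * ⟪G x, v⟫ + L / 2 * ‖v‖ ^ 2 * t ^ 2)
      (⟪G x, v⟫ + L * ‖v‖ ^ 2 * t) t := by
    have := (((hasDerivAt_id' t).mul_const ⟪G x, v⟫).const_add (f x)).fun_add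
      ((hasDerivAt_pow 2 t).const_mul (L / 2 * ‖v‖ ^ 2))
    exact this.congr_deriv (by norm_num; ring)
  have := image_le_of_deriv_right_le_deriv_boundary (a := 0) (b := 1)
    (fun t _ => (hline t).continuousAt.continuousWithinAt)
    (fun t _ => (hline t).hasDerivWithinAt) (by simp)
    (fun t _ => (hbound t).continuousAt.continuousWithinAt)
    (fun t _ => (hbound t).hasDerivWithinAt) ?_ (Set.right_mem_Icc.2 zero_le_one)
  · simpa [v] using this
  · rintro t ⟨ht, -⟩
    have hlip : ⟪G (x + t • v) - G x, v⟫ ≤ L * ‖v‖ ^ 2 * t :=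
      calc ⟪G (x + t • v) - G x, v⟫ ≤ ‖G (x + t • v) - G x‖ * ‖v‖ := real_inner_le_norm _ _
        _ ≤ L * ‖t • v‖ * ‖v‖ := by
          gcongr
          simpa using hG (x + t • v) x
        _ = L * ‖v‖ ^ 2 * t := by rw [norm_smul, Real.norm_of_nonneg ht]; ring
    rw [inner_sub_left] at hlip
    linarith

theorem sq_norm_le_of_quadratic_majorant {f : E → ℝ} {G : E → E} {L m : ℝ} (hL : 0 < L)
    (hdesc : ∀ x y, f y ≤ f x + ⟪G x, y - x⟫ + L / 2 * ‖y - x‖ ^ 2) (hm : ∀ z, m ≤ f z) (x : E) :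
    ‖G x‖ ^ 2 ≤ 2 * L * (f x - m) := by
  have h := (hm _).trans (hdesc x (x - L⁻¹ • G x))
  rw [sub_sub_cancel_left, inner_neg_right, real_inner_smul_right, real_inner_self_eq_norm_sq,
    norm_neg, norm_smul, Real.norm_of_nonneg (inv_nonneg.2 hL.le)] at h
  calc ‖G x‖ ^ 2 = L * (L⁻¹ * ‖G x‖ ^ 2) := by field_simp
    _ ≤ L * (2 * (f x - m)) := by
      refine mul_le_mul_of_nonneg_left ?_ hL.le
      have : L / 2 * (L⁻¹ * ‖G x‖) ^ 2 = L⁻¹ * ‖G x‖ ^ 2 / 2 := by field_simp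
      linarith
    _ = 2 * L * (f x - m) := by ring

theorem le_of_quadratic_minorant_of_majorant [Nontrivial E] {f : E → ℝ} {G : E → E} {μ L : ℝ}
    (hlow : ∀ x y, f y ≥ f x + ⟪G x, y - x⟫ + μ / 2 * ‖y - x‖ ^ 2)
    (hup : ∀ x y, f y ≤ f x + ⟪G x, y - x⟫ + L / 2 * ‖y - x‖ ^ 2) : μ ≤ L := by
  obtain ⟨v, hv⟩ := exists_ne (0 : E)
  have h := (hlow 0 v).trans (hup 0 v)
  have hv2 : 0 < ‖v - 0‖ ^ 2 := by rw [sub_zero]; positivity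
  nlinarith

variable {ι : Type*} [Fintype ι]

theorem inner_eq_expect_of_hasGradientAt [CompleteSpace E] {f : ι → E → ℝ} {g : ι → E} {F : E → ℝ}
    {gF x : E} (hf : ∀ i, HasGradientAt (f i) (g i) x) (hF : ∀ y, F y = 𝔼 i, f i y)
    (hgF : HasGradientAt F gF x) (w : E) : ⟪gF, w⟫ = 𝔼 i, ⟪g i, w⟫ := by
  have hsum := HasFDerivAt.fun_sum (u := univ) fun i _ => (hf i).hasFDerivAt
  have hmean : HasFDerivAt F
      ((Fintype.card ι : ℝ)⁻¹ • ∑ i, InnerProductSpace.toDual ℝ E (g i)) x := by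
    simp_rw [funext hF, Fintype.expect_eq_sum_div_card, div_eq_inv_mul]
    exact hsum.const_mul _
  have := congrArg (· w) (hgF.hasFDerivAt.unique hmean)
  simpa [Fintype.expect_eq_sum_div_card, div_eq_inv_mul] using this

theorem expect_tuple_succ {M : Type*} [AddCommMonoid M] [Module ℚ≥0 M] (k : ℕ)
    (h : ι → (Fin k → ι) → M) :
    𝔼 ω : Fin (k + 1) → ι, h (ω (Fin.last k)) (fun j => ω j.castSucc) = 𝔼 ω, 𝔼 i, h i ω := by
  rw [← Fintype.expect_equiv (Fin.snocEquiv fun _ => ι) (fun p => h p.1 p.2) _ (by simp),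
    ← univ_product_univ, expect_product, expect_comm]

variable [Nonempty ι]

theorem expect_le_add_inner_add_sq_norm {f : ι → E → ℝ} {G : ι → E → E} {F : E → ℝ}
    {GF : E → E} {L : ℝ} (hdesc : ∀ i x y, f i y ≤ f i x + ⟪G i x, y - x⟫ + L / 2 * ‖y - x‖ ^ 2)
    (hF : ∀ y, F y = 𝔼 i, f i y) (hGF : ∀ x w, ⟪GF x, w⟫ = 𝔼 i, ⟪G i x, w⟫) (x y : E) :
    F y ≤ F x + ⟪GF x, y - x⟫ + L / 2 * ‖y - x‖ ^ 2 :=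
  calc F y ≤ 𝔼 i, (f i x + ⟪G i x, y - x⟫ + L / 2 * ‖y - x‖ ^ 2) :=
        hF y ▸ expect_le_expect fun i _ => hdesc i x y
    _ = _ := by rw [expect_add_distrib, expect_add_distrib, Fintype.expect_const, hF, hGF]

theorem expect_sq_norm_sub_smul_le (w : E) (g : ι → E) {γ L μ Δ σ : ℝ}
    (hγ : 0 ≤ γ) (hγL : γ * L ≤ 1) (hΔ : 0 ≤ Δ) (hσ : 0 ≤ σ)
    (hinner : Δ + μ / 2 * ‖w‖ ^ 2 ≤ 𝔼 i, ⟪g i, w⟫)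
    (hnorm : 𝔼 i, ‖g i‖ ^ 2 ≤ 2 * L * (Δ + σ)) :
    𝔼 i, ‖w - γ • g i‖ ^ 2 ≤ (1 - μ * γ) * ‖w‖ ^ 2 + 2 * γ * σ := by
  have hexpand : 𝔼 i, ‖w - γ • g i‖ ^ 2
      = ‖w‖ ^ 2 - 2 * γ * 𝔼 i, ⟪g i, w⟫ + γ ^ 2 * 𝔼 i, ‖g i‖ ^ 2 := by
    simp_rw [norm_sub_sq_real, real_inner_smul_right, norm_smul, mul_pow, Real.norm_eq_abs, sq_abs,
      real_inner_comm w]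
    rw [expect_add_distrib, expect_sub_distrib, Fintype.expect_const, mul_expect, mul_expect]
    simp only [mul_assoc]
  have h1 := mul_le_mul_of_nonneg_left hinner (by positivity : (0 : ℝ) ≤ 2 * γ)
  have h2 := mul_le_mul_of_nonneg_left hnorm (by positivity : (0 : ℝ) ≤ γ ^ 2)
  have h3 := mul_nonneg (mul_nonneg hγ hΔ) (sub_nonneg.2 hγL)
  have h4 := mul_nonneg (mul_nonneg hγ hσ) (sub_nonneg.2 hγL)
  nlinarith

theorem expect_iterate_le_of_drift {α : Type*} (T : ι → α → α) (V : α → ℝ) {q b : ℝ}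
    (hq : 0 ≤ q) (hb : 0 ≤ b) (hdrift : ∀ x, 𝔼 i, V (T i x) ≤ q * V x + (1 - q) * b) (x0 : α)
    (Y : (k : ℕ) → (Fin k → ι) → α) (hY0 : ∀ ω, Y 0 ω = x0)
    (hYstep : ∀ k (ω : Fin (k + 1) → ι),
      Y (k + 1) ω = T (ω (Fin.last k)) (Y k fun j => ω j.castSucc))
    (k : ℕ) : 𝔼 ω, V (Y k ω) ≤ q ^ k * V x0 + b := by
  induction k with
  | zero => simpa [hY0] using hb
  | succ k ih =>
    calc 𝔼 ω, V (Y (k + 1) ω) = 𝔼 ω, 𝔼 i, V (T i (Y k ω)) := by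
          simp_rw [hYstep]; exact expect_tuple_succ k fun i ω => V (T i (Y k ω))
      _ ≤ 𝔼 ω, (q * V (Y k ω) + (1 - q) * b) := expect_le_expect fun ω _ => hdrift _
      _ = q * 𝔼 ω, V (Y k ω) + (1 - q) * b := by
          rw [expect_add_distrib, mul_expect, Fintype.expect_const]
      _ ≤ q * (q ^ k * V x0 + b) + (1 - q) * b := by gcongr
      _ = q ^ (k + 1) * V x0 + b := by ring

theorem expect_sq_dist_sgd_step_le {f : ι → E → ℝ} {G : ι → E → E} {F : E → ℝ} {GF : E → E}
    {fstar : ι → ℝ} {L μ γ : ℝ} {xstar : E} (hL : 0 < L)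
    (hdesc : ∀ i x y, f i y ≤ f i x + ⟪G i x, y - x⟫ + L / 2 * ‖y - x‖ ^ 2)
    (hfstar : ∀ i x, fstar i ≤ f i x) (hF : ∀ x, F x = 𝔼 i, f i x)
    (hGF : ∀ x w, ⟪GF x, w⟫ = 𝔼 i, ⟪G i x, w⟫)
    (hsc : ∀ x y, F y ≥ F x + ⟪GF x, y - x⟫ + μ / 2 * ‖y - x‖ ^ 2)
    (hxstar : ∀ y, F xstar ≤ F y) (hγ : 0 ≤ γ) (hγL : γ * L ≤ 1) (x : E) :
    𝔼 i, ‖x - γ • G i x - xstar‖ ^ 2 ≤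
      (1 - μ * γ) * ‖x - xstar‖ ^ 2 + 2 * γ * (F xstar - 𝔼 i, fstar i) := by
  simp_rw [sub_right_comm x]
  refine expect_sq_norm_sub_smul_le _ _ hγ hγL (sub_nonneg.2 (hxstar x)) ?_ ?_ ?_
  · exact sub_nonneg.2 (hF xstar ▸ expect_le_expect fun i _ => hfstar i xstar)
  · have h := hsc x xstar
    rw [← neg_sub x xstar, inner_neg_right, norm_neg, hGF] at h
    linarith
  · calc 𝔼 i, ‖G i x‖ ^ 2 ≤ 𝔼 i, 2 * L * (f i x - fstar i) := expect_le_expect fun i _ =>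
          sq_norm_le_of_quadratic_majorant hL (hdesc i) (hfstar i) x
      _ = 2 * L * (F x - F xstar + (F xstar - 𝔼 i, fstar i)) := by
        rw [← mul_expect, expect_sub_distrib, hF]
        ring

theorem expect_sq_dist_sgd_le [CompleteSpace E] {f : ι → E → ℝ} {G : ι → E → E} {F : E → ℝ}
    {GF : E → E} {fstar : ι → ℝ} {L μ γ : ℝ} {xstar : E}
    (hgrad : ∀ i x, HasGradientAt (f i) (G i x) x) (hL : 0 < L)
    (hsmooth : ∀ i x y, ‖G i x - G i y‖ ≤ L * ‖x - y‖) (hfstar : ∀ i x, fstar i ≤ f i x)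
    (hF : ∀ x, F x = 𝔼 i, f i x) (hGF : ∀ x, HasGradientAt F (GF x) x) (hμ : 0 < μ)
    (hsc : ∀ x y, F y ≥ F x + ⟪GF x, y - x⟫ + μ / 2 * ‖y - x‖ ^ 2)
    (hxstar : ∀ y, F xstar ≤ F y) (hγ : 0 ≤ γ) (hγL : γ * L ≤ 1) (x0 : E)
    (Y : (k : ℕ) → (Fin k → ι) → E) (hY0 : ∀ ω, Y 0 ω = x0)
    (hYstep : ∀ k (ω : Fin (k + 1) → ι),
      Y (k + 1) ω =
        Y k (fun j => ω j.castSucc) - γ • G (ω (Fin.last k)) (Y k fun j => ω j.castSucc))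
    (k : ℕ) :
    𝔼 ω, ‖Y k ω - xstar‖ ^ 2 ≤
      (1 - μ * γ) ^ k * ‖x0 - xstar‖ ^ 2 + 2 * (F xstar - 𝔼 i, fstar i) / μ := by
  set σ2 := F xstar - 𝔼 i, fstar i
  have hσ : 0 ≤ σ2 := sub_nonneg.2 (hF xstar ▸ expect_le_expect fun i _ => hfstar i xstar)
  have hdesc := fun i => le_add_inner_add_sq_norm_of_lipschitz_gradient (hgrad i) (hsmooth i)
  have hGF' : ∀ x w, ⟪GF x, w⟫ = 𝔼 i, ⟪G i x, w⟫ := fun x =>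
    inner_eq_expect_of_hasGradientAt (fun i => hgrad i x) hF (hGF x)
  rcases subsingleton_or_nontrivial E with hE | hE
  · have h0 (x : E) : ‖x - xstar‖ = 0 := by rw [Subsingleton.elim x xstar, sub_self, norm_zero]
    simp [h0]
    positivity
  have hμL : μ ≤ L :=
    le_of_quadratic_minorant_of_majorant hsc (expect_le_add_inner_add_sq_norm hdesc hF hGF')
  have hdrift (x : E) : 𝔼 i, ‖x - γ • G i x - xstar‖ ^ 2 ≤
      (1 - μ * γ) * ‖x - xstar‖ ^ 2 + (1 - (1 - μ * γ)) * (2 * σ2 / μ) := by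
    convert expect_sq_dist_sgd_step_le hL hdesc hfstar hF hGF' hsc hxstar hγ hγL x using 2
    field_simp
    ring
  exact expect_iterate_le_of_drift (fun i x => x - γ • G i x) (fun x => ‖x - xstar‖ ^ 2)
    (by nlinarith) (by positivity) hdrift x0 Y hY0 hYstep k

theorem stmt7_general {d n : ℕ} (hn : 0 < n)
    (f : Fin n → EuclideanSpace ℝ (Fin d) → ℝ)
    (G : Fin n → EuclideanSpace ℝ (Fin d) → EuclideanSpace ℝ (Fin d))
    (hgrad : ∀ i x, HasGradientAt (f i) (G i x) x)
    (L : Fin n → ℝ) (hL : ∀ i, 0 < L i)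
    (hsmooth : ∀ i x y, ‖G i x - G i y‖ ≤ L i * ‖x - y‖)
    (fstar : Fin n → ℝ) (hfstar : ∀ i, IsGLB (Set.range (f i)) (fstar i))
    (F : EuclideanSpace ℝ (Fin d) → ℝ) (hF : ∀ x, F x = (1 / (n : ℝ)) * ∑ i, f i x)
    (GF : EuclideanSpace ℝ (Fin d) → EuclideanSpace ℝ (Fin d))
    (hGF : ∀ x, HasGradientAt F (GF x) x)
    (μ : ℝ) (hμ : 0 < μ)
    (hsc : ∀ x y, F y ≥ F x + ⟪GF x, y - x⟫ + μ / 2 * ‖y - x‖ ^ 2)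
    (xstar : EuclideanSpace ℝ (Fin d)) (hxstar : ∀ y, F xstar ≤ F y)
    (σ2 : ℝ) (hσ2 : σ2 = F xstar - (1 / (n : ℝ)) * ∑ i, fstar i)
    (Lmax : ℝ) (hLmax : Lmax = Finset.univ.sup' ⟨⟨0, hn⟩, Finset.mem_univ _⟩ L)
    (γ : ℝ) (hγ0 : 0 < γ) (hγ : γ ≤ 1 / Lmax)
    (x0 : EuclideanSpace ℝ (Fin d))
    (Y : (k : ℕ) → (Fin k → Fin n) → EuclideanSpace ℝ (Fin d))
    (hY0 : ∀ ω, Y 0 ω = x0)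
    (hYstep : ∀ (k : ℕ) (ω : Fin (k + 1) → Fin n),
      Y (k + 1) ω =
        Y k (fun j => ω j.castSucc) -
          γ • G (ω (Fin.last k)) (Y k (fun j => ω j.castSucc))) :
    ∀ k : ℕ, (1 / (n : ℝ) ^ k) * ∑ ω : Fin k → Fin n, ‖Y k ω - xstar‖ ^ 2 ≤
      (1 - μ * γ) ^ k * ‖x0 - xstar‖ ^ 2 + 2 * σ2 / μ := by
  have : Nonempty (Fin n) := ⟨⟨0, hn⟩⟩
  have hmean (g : Fin n → ℝ) : 1 / (n : ℝ) * ∑ i, g i = 𝔼 i, g i := by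
    rw [Fintype.expect_eq_sum_div_card, Fintype.card_fin, one_div_mul_eq_div]
  have hLi : ∀ i, L i ≤ Lmax := fun i => hLmax ▸ le_sup' L (mem_univ i)
  have hLmax_pos : 0 < Lmax := (hL ⟨0, hn⟩).trans_le (hLi _)
  intro k
  have hcard : (n : ℝ) ^ k = Fintype.card (Fin k → Fin n) := by simp
  rw [one_div_mul_eq_div, hcard, ← Fintype.expect_eq_sum_div_card, hσ2, hmean]
  refine expect_sq_dist_sgd_le hgrad hLmax_pos
    (fun i x y => (hsmooth i x y).trans (mul_le_mul_of_nonneg_right (hLi i) (norm_nonneg _)))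
    (fun i x => (hfstar i).1 ⟨x, rfl⟩) (fun x => (hF x).trans (hmean _)) hGF hμ hsc hxstar
    hγ0.le ?_ x0 Y hY0 hYstep k
  rwa [le_div_iff₀ hLmax_pos] at hγ

/-- Constant step-size SGD for strongly convex `f` with convex smooth `f_i`:
for `γ ≤ 1/L_max`, `E‖x^k − x*‖² ≤ (1 − μγ)^k ‖x^0 − x*‖² + 2σ²/μ`, where
`σ² = f(x*) − E_i[f_i*]` and expectation is over the i.i.d. uniform indices. -/
theorem stmt7 {d n : ℕ} (hn : 0 < n)
    (f : Fin n → EuclideanSpace ℝ (Fin d) → ℝ)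
    (G : Fin n → EuclideanSpace ℝ (Fin d) → EuclideanSpace ℝ (Fin d))
    (hgrad : ∀ i x, HasGradientAt (f i) (G i x) x)
    (hconv : ∀ i x y, f i y ≥ f i x + ⟪G i x, y - x⟫)
    (L : Fin n → ℝ) (hL : ∀ i, 0 < L i)
    (hsmooth : ∀ i x y, ‖G i x - G i y‖ ≤ L i * ‖x - y‖)
    (fstar : Fin n → ℝ) (hfstar : ∀ i, IsGLB (Set.range (f i)) (fstar i))
    (F : EuclideanSpace ℝ (Fin d) → ℝ) (hF : ∀ x, F x = (1 / (n : ℝ)) * ∑ i, f i x)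
    (GF : EuclideanSpace ℝ (Fin d) → EuclideanSpace ℝ (Fin d))
    (hGF : ∀ x, HasGradientAt F (GF x) x)
    (μ : ℝ) (hμ : 0 < μ)
    (hsc : ∀ x y, F y ≥ F x + ⟪GF x, y - x⟫ + μ / 2 * ‖y - x‖ ^ 2)
    (xstar : EuclideanSpace ℝ (Fin d)) (hxstar : ∀ y, F xstar ≤ F y)
    (σ2 : ℝ) (hσ2 : σ2 = F xstar - (1 / (n : ℝ)) * ∑ i, fstar i)
    (Lmax : ℝ) (hLmax : Lmax = Finset.univ.sup' ⟨⟨0, hn⟩, Finset.mem_univ _⟩ L)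
    (γ : ℝ) (hγ0 : 0 < γ) (hγ : γ ≤ 1 / Lmax)
    (x0 : EuclideanSpace ℝ (Fin d))
    (Y : (k : ℕ) → (Fin k → Fin n) → EuclideanSpace ℝ (Fin d))
    (hY0 : ∀ ω, Y 0 ω = x0)
    (hYstep : ∀ (k : ℕ) (ω : Fin (k + 1) → Fin n),
      Y (k + 1) ω =
        Y k (fun j => ω j.castSucc) -
          γ • G (ω (Fin.last k)) (Y k (fun j => ω j.castSucc))) :
    ∀ k : ℕ, (1 / (n : ℝ) ^ k) * ∑ ω : Fin k → Fin n, ‖Y k ω - xstar‖ ^ 2 ≤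
      (1 - μ * γ) ^ k * ‖x0 - xstar‖ ^ 2 + 2 * σ2 / μ :=
  stmt7_general hn f G hgrad L hL hsmooth fstar hfstar F hF GF hGF μ hμ hsc xstar hxstar σ2 hσ2 Lmax
    hLmax γ hγ0 hγ x0 Y hY0 hYstep
end

section
/- SGD with SPS_max, convex case: if f_i are convex and L_i-smooth, then the iterates x^{k+1} = x^k − γ_k ∇f_i(x^k) with γ_k = min{(f_i(x^k) − f_i*)/‖∇f_i(x^k)‖², γ_b} (c = 1) satisfy E[f(x̄^K) − f(x*)] ≤ ‖x^0 − x*‖²/(αK) + 2σ²γ_b/α, where α = min{1/(2L_max), γ_b} and x̄^K = (1/K)Σ_{k=0}^{K−1} x^k. -/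
/-!
With the capped Polyak step `γ = min ((fᵢ x - fᵢ*) / ‖∇fᵢ x‖², γ_b)` one has
`γ ‖∇fᵢ x‖² ≤ fᵢ x - fᵢ*`, so expanding the square and using convexity gives
`‖x⁺ - x*‖² ≤ ‖x - x*‖² - 2γ (fᵢ x - fᵢ x*) + γ (fᵢ x - fᵢ*)`. Smoothness gives
`‖∇fᵢ x‖² ≤ 2 Lᵢ (fᵢ x - fᵢ*)`, hence `γ ≥ α` unless `fᵢ x = fᵢ*`; writing
`fᵢ x - fᵢ* = (fᵢ x - fᵢ x*) + (fᵢ x* - fᵢ*)` this yields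
`α (fᵢ x - fᵢ x*) + ‖x⁺ - x*‖² ≤ ‖x - x*‖² + 2 γ_b (fᵢ x* - fᵢ*)`.
Averaging over the sampled index and the past samples, telescoping in `k` and Jensen's inequality
for the convex `f` at the averaged iterate give the bound.
-/

open scoped RealInnerProductSpace BigOperators
open Finset

section PolyakStepMax

variable {E : Type*} {f : E → ℝ} {g : E → E} {fs γb : ℝ} {x : E}

noncomputable def polyakStepMax [Norm E] (f : E → ℝ) (g : E → E) (fs γb : ℝ) (x : E) : ℝ :=
  min ((f x - fs) / ‖g x‖ ^ 2) γb

theorem polyakStepMax_nonneg [Norm E] (hx : fs ≤ f x) (hγb : 0 ≤ γb) :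
    0 ≤ polyakStepMax f g fs γb x :=
  le_min (div_nonneg (sub_nonneg.2 hx) (sq_nonneg _)) hγb

theorem polyakStepMax_le [Norm E] : polyakStepMax f g fs γb x ≤ γb := min_le_right _ _

theorem polyakStepMax_mul_sq_norm_le [NormedAddCommGroup E] (hx : fs ≤ f x) :
    polyakStepMax f g fs γb x * ‖g x‖ ^ 2 ≤ f x - fs := by
  rcases eq_or_ne (g x) 0 with h | h
  · simpa [h] using hx
  · exact (le_div_iff₀ (by positivity)).1 (min_le_left _ _)

end PolyakStepMax

section SmoothConvex

variable {E : Type*} [NormedAddCommGroup E] [InnerProductSpace ℝ E]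
  {f : E → ℝ} {g : E → E} {L fs γb : ℝ}

theorem le_add_inner_add_sq_of_lipschitz_gradient [CompleteSpace E]
    (hg : ∀ x, HasGradientAt f (g x) x) (hL : ∀ x y, ‖g x - g y‖ ≤ L * ‖x - y‖)
    (x y : E) : f y ≤ f x + ⟪g x, y - x⟫ + L / 2 * ‖y - x‖ ^ 2 := by
  set v := y - x
  let φ : ℝ → ℝ := fun t => f (x + t • v) - t * ⟪g x, v⟫ - L / 2 * t ^ 2 * ‖v‖ ^ 2
  have hφ : ∀ t, HasDerivAt φ (⟪g (x + t • v) - g x, v⟫ - L * t * ‖v‖ ^ 2) t := by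
    intro t
    have hline : HasDerivAt (fun t : ℝ => x + t • v) v t := by
      simpa using ((hasDerivAt_id t).smul_const v).const_add x
    refine ((((hg _).hasFDerivAt.comp_hasDerivAt t hline).sub
      ((hasDerivAt_id t).mul_const ⟪g x, v⟫)).sub
      (((hasDerivAt_pow 2 t).const_mul (L / 2)).mul_const (‖v‖ ^ 2))).congr_deriv ?_
    simp only [InnerProductSpace.toDual_apply_apply, inner_sub_left]
    ring
  have hanti : AntitoneOn φ (Set.Icc 0 1) := by
    refine antitoneOn_of_hasDerivWithinAt_nonpos (convex_Icc 0 1)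
      (fun t _ => (hφ t).continuousAt.continuousWithinAt) (fun t _ => (hφ t).hasDerivWithinAt) ?_
    intro t ht
    rw [interior_Icc] at ht
    calc ⟪g (x + t • v) - g x, v⟫ - L * t * ‖v‖ ^ 2
        ≤ ‖g (x + t • v) - g x‖ * ‖v‖ - L * t * ‖v‖ ^ 2 := by
          gcongr; exact real_inner_le_norm _ _
      _ ≤ L * ‖t • v‖ * ‖v‖ - L * t * ‖v‖ ^ 2 := by
          gcongr; simpa using hL (x + t • v) x
      _ = 0 := by rw [norm_smul, Real.norm_of_nonneg ht.1.le]; ring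
  have h01 : φ 1 ≤ φ 0 :=
    hanti (Set.left_mem_Icc.2 zero_le_one) (Set.right_mem_Icc.2 zero_le_one) zero_le_one
  have hφ1 : φ 1 = f y - ⟪g x, v⟫ - L / 2 * ‖v‖ ^ 2 := by simp [φ, v]
  have hφ0 : φ 0 = f x := by simp [φ]
  linarith

theorem sq_norm_gradient_le_of_lipschitz_gradient [CompleteSpace E]
    (hg : ∀ x, HasGradientAt f (g x) x) (hL : ∀ x y, ‖g x - g y‖ ≤ L * ‖x - y‖)
    (hLpos : 0 < L) {m : ℝ} (hm : ∀ y, m ≤ f y) (x : E) :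
    ‖g x‖ ^ 2 ≤ 2 * L * (f x - m) := by
  have h := le_add_inner_add_sq_of_lipschitz_gradient hg hL x (x - L⁻¹ • g x)
  rw [sub_sub_cancel_left, inner_neg_right, norm_neg, real_inner_smul_right,
    real_inner_self_eq_norm_sq, norm_smul, Real.norm_of_nonneg (inv_nonneg.2 hLpos.le)] at h
  have hquad : L / 2 * (L⁻¹ * ‖g x‖) ^ 2 = L⁻¹ * ‖g x‖ ^ 2 / 2 := by field_simp
  have key : L⁻¹ * ‖g x‖ ^ 2 ≤ 2 * (f x - m) := by linarith [hm (x - L⁻¹ • g x)]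
  calc ‖g x‖ ^ 2 = L * (L⁻¹ * ‖g x‖ ^ 2) := by field_simp
    _ ≤ L * (2 * (f x - m)) := by gcongr
    _ = 2 * L * (f x - m) := by ring

theorem convexOn_univ_of_le_add_inner (h : ∀ x y, f x + ⟪g x, y - x⟫ ≤ f y) :
    ConvexOn ℝ Set.univ f := by
  refine ⟨convex_univ, fun x _ y _ a b ha hb hab => ?_⟩
  set z := a • x + b • y
  have hz : a • (x - z) + b • (y - z) = 0 := by
    rw [show a • (x - z) + b • (y - z) = z - (a + b) • z by simp only [z, smul_sub, add_smul]; abel,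
      hab, one_smul, sub_self]
  have hinner : a * ⟪g z, x - z⟫ + b * ⟪g z, y - z⟫ = 0 := by
    simpa only [inner_add_right, real_inner_smul_right, inner_zero_right] using
      congrArg (⟪g z, ·⟫) hz
  have hfz : f z = a * f z + b * f z := by rw [← add_mul, hab, one_mul]
  simp only [smul_eq_mul]
  linarith [mul_le_mul_of_nonneg_left (h z x) ha, mul_le_mul_of_nonneg_left (h z y) hb]

theorem min_mul_le_polyakStepMax_mul [CompleteSpace E]
    (hg : ∀ x, HasGradientAt f (g x) x) (hL : ∀ x y, ‖g x - g y‖ ≤ L * ‖x - y‖) (hLpos : 0 < L)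
    (hconv : ∀ x y, f x + ⟪g x, y - x⟫ ≤ f y) (hfs : IsGLB (Set.range f) fs) (x : E) :
    min (1 / (2 * L)) γb * (f x - fs) ≤ polyakStepMax f g fs γb x * (f x - fs) := by
  have hD : 0 ≤ f x - fs := sub_nonneg.2 (hfs.1 ⟨x, rfl⟩)
  rcases eq_or_ne (g x) 0 with h | h
  · -- the step is `0` here (division by `0`), but convexity makes `x` a minimiser: `f x = fs`
    have : f x ≤ fs := hfs.2 (by rintro _ ⟨y, rfl⟩; simpa [h] using hconv x y)
    rw [show f x - fs = 0 by linarith, mul_zero, mul_zero]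
  · have hbound := sq_norm_gradient_le_of_lipschitz_gradient hg hL hLpos
      (fun y => hfs.1 ⟨y, rfl⟩) x
    refine mul_le_mul_of_nonneg_right (min_le_min ?_ le_rfl) hD
    rw [div_le_div_iff₀ (by positivity) (by positivity)]
    linarith

theorem polyakStepMax_descent [CompleteSpace E] {α : ℝ}
    (hg : ∀ x, HasGradientAt f (g x) x) (hL : ∀ x y, ‖g x - g y‖ ≤ L * ‖x - y‖) (hLpos : 0 < L)
    (hconv : ∀ x y, f x + ⟪g x, y - x⟫ ≤ f y) (hfs : IsGLB (Set.range f) fs)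
    (hα0 : 0 ≤ α) (hα : α ≤ min (1 / (2 * L)) γb) (x xstar : E) :
    α * (f x - f xstar) + ‖x - polyakStepMax f g fs γb x • g x - xstar‖ ^ 2 ≤
      ‖x - xstar‖ ^ 2 + 2 * γb * (f xstar - fs) := by
  set γ := polyakStepMax f g fs γb x
  have hlb : ∀ y, fs ≤ f y := fun y => hfs.1 ⟨y, rfl⟩
  have hγ0 : 0 ≤ γ := polyakStepMax_nonneg (hlb x) (hα0.trans (hα.trans (min_le_right _ _)))
  have hD : 0 ≤ f x - fs := sub_nonneg.2 (hlb x)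
  have hDstar : 0 ≤ f xstar - fs := sub_nonneg.2 (hlb xstar)
  have hexpand : ‖x - γ • g x - xstar‖ ^ 2 =
      ‖x - xstar‖ ^ 2 - 2 * (γ * ⟪g x, x - xstar⟫) + γ * (γ * ‖g x‖ ^ 2) := by
    rw [show x - γ • g x - xstar = (x - xstar) - γ • g x by abel, norm_sub_sq_real,
      real_inner_smul_right, real_inner_comm, norm_smul, mul_pow, Real.norm_eq_abs, sq_abs]
    ring
  have hinner : γ * (f x - f xstar) ≤ γ * ⟪g x, x - xstar⟫ := by
    gcongr
    have := hconv x xstar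
    rw [← neg_sub x xstar, inner_neg_right] at this
    linarith
  have hstep : γ * (γ * ‖g x‖ ^ 2) ≤ γ * (f x - fs) :=
    mul_le_mul_of_nonneg_left (polyakStepMax_mul_sq_norm_le (hlb x)) hγ0
  have hlower : α * (f x - fs) ≤ γ * (f x - fs) :=
    (mul_le_mul_of_nonneg_right hα hD).trans (min_mul_le_polyakStepMax_mul hg hL hLpos hconv hfs x)
  have hupper : γ * (f xstar - fs) ≤ γb * (f xstar - fs) :=
    mul_le_mul_of_nonneg_right polyakStepMax_le hDstar
  rw [hexpand]
  linarith [mul_nonneg hα0 hDstar]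

theorem expect_polyakStepMax_descent [CompleteSpace E] {ι : Type*} [Fintype ι] [Nonempty ι]
    {f : ι → E → ℝ} {g : ι → E → E} {L fs : ι → ℝ} {α : ℝ}
    (hg : ∀ i x, HasGradientAt (f i) (g i x) x)
    (hL : ∀ i x y, ‖g i x - g i y‖ ≤ L i * ‖x - y‖) (hLpos : ∀ i, 0 < L i)
    (hconv : ∀ i x y, f i x + ⟪g i x, y - x⟫ ≤ f i y) (hfs : ∀ i, IsGLB (Set.range (f i)) (fs i))
    (hα0 : 0 ≤ α) (hα : ∀ i, α ≤ min (1 / (2 * L i)) γb) (x xstar : E) :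
    α * (𝔼 i, f i x - 𝔼 i, f i xstar) +
        𝔼 i, ‖x - polyakStepMax (f i) (g i) (fs i) γb x • g i x - xstar‖ ^ 2 ≤
      ‖x - xstar‖ ^ 2 + 2 * γb * (𝔼 i, f i xstar - 𝔼 i, fs i) := by
  have := expect_le_expect (s := univ) fun i _ =>
    polyakStepMax_descent (hg i) (hL i) (hLpos i) (hconv i) (hfs i) hα0 (hα i) x xstar
  simpa only [expect_add_distrib, expect_sub_distrib, ← mul_expect, Fintype.expect_const] using this

end SmoothConvex

section RandomIterates

variable {ι M : Type*} [Fintype ι] [AddCommMonoid M] [Module ℚ≥0 M]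

theorem expect_fun_fin_succ (k : ℕ) (φ : (Fin (k + 1) → ι) → M) :
    𝔼 ω, φ ω = 𝔼 ω : Fin k → ι, 𝔼 i, φ (Fin.snoc ω i) := by
  rw [← Fintype.expect_equiv (Fin.snocEquiv fun _ => ι) (fun p => φ (Fin.snoc p.2 p.1)) φ
    (fun _ => rfl), ← univ_product_univ, expect_product' univ univ fun i ω => φ (Fin.snoc ω i),
    expect_comm]

theorem expect_comp_castLE [Nonempty ι] {k K : ℕ} (h : k ≤ K) (φ : (Fin k → ι) → M) :
    𝔼 ω : Fin K → ι, φ (fun j => ω (Fin.castLE h j)) = 𝔼 ω, φ ω := by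
  induction K, h using Nat.le_induction with
  | base => rfl
  | succ K hkK ih =>
    have hsnoc : ∀ (ω : Fin K → ι) i j, (Fin.snoc ω i : Fin (K + 1) → ι)
        (Fin.castLE (hkK.trans K.le_succ) j) = ω (Fin.castLE hkK j) := fun ω i j =>
      Fin.snoc_castSucc (α := fun _ => ι) (p := ω) (x := i) (i := Fin.castLE hkK j)
    simp only [expect_fun_fin_succ, hsnoc, Fintype.expect_const]
    exact ih

variable [Nonempty ι] {E : Type*}

theorem sum_expect_iterate_le (T : ι → E → E) (Y : (k : ℕ) → (Fin k → ι) → E) (x0 : E)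
    (hY0 : ∀ ω, Y 0 ω = x0)
    (hY : ∀ k (ω : Fin (k + 1) → ι), Y (k + 1) ω = T (ω (Fin.last k)) (Y k fun j => ω j.castSucc))
    (a V : E → ℝ) (c : ℝ) (hV : ∀ x, 0 ≤ V x) (hstep : ∀ x, a x + 𝔼 i, V (T i x) ≤ V x + c)
    (K : ℕ) : ∑ k ∈ range K, 𝔼 ω, a (Y k ω) ≤ V x0 + K * c := by
  have hrec : ∀ k, 𝔼 ω, a (Y k ω) + 𝔼 ω, V (Y (k + 1) ω) ≤ 𝔼 ω, V (Y k ω) + c := by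
    intro k
    simp only [expect_fun_fin_succ, hY, Fin.snoc_last, Fin.snoc_castSucc]
    calc 𝔼 ω, a (Y k ω) + 𝔼 ω, 𝔼 i, V (T i (Y k ω))
        = 𝔼 ω, (a (Y k ω) + 𝔼 i, V (T i (Y k ω))) := (expect_add_distrib _ _ _).symm
      _ ≤ 𝔼 ω, (V (Y k ω) + c) := expect_le_expect fun ω _ => hstep _
      _ = 𝔼 ω, V (Y k ω) + c := by rw [expect_add_distrib, Fintype.expect_const]
  have htelescope : ∀ K, ∑ k ∈ range K, 𝔼 ω, a (Y k ω) + 𝔼 ω, V (Y K ω) ≤ V x0 + K * c := by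
    intro K
    induction K with
    | zero => simp [hY0]
    | succ K ih =>
      rw [sum_range_succ, Nat.cast_succ]
      linarith [hrec K]
  linarith [htelescope K, expect_nonneg (s := univ) fun ω _ => hV (Y K ω)]

theorem convexOn_expect [AddCommGroup E] [Module ℝ E] {s : Set E}
    {f : ι → E → ℝ} (hf : ∀ i, ConvexOn ℝ s (f i)) : ConvexOn ℝ s fun x => 𝔼 i, f i x := by
  refine ⟨(hf (Classical.arbitrary ι)).1, fun x hx y hy a b ha hb hab => ?_⟩
  calc 𝔼 i, f i (a • x + b • y) ≤ 𝔼 i, (a • f i x + b • f i y) :=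
        expect_le_expect fun i _ => (hf i).2 hx hy ha hb hab
    _ = a • 𝔼 i, f i x + b • 𝔼 i, f i y := by
        simp only [smul_eq_mul, expect_add_distrib, mul_expect]

theorem ConvexOn.expect_map_average_le [AddCommGroup E] [Module ℝ E] {F : E → ℝ}
    (hF : ConvexOn ℝ Set.univ F) (Y : (k : ℕ) → (Fin k → ι) → E) {K : ℕ} (hK : 0 < K) :
    𝔼 ω : Fin K → ι, F ((K : ℝ)⁻¹ • ∑ k : Fin K, Y k fun j => ω (Fin.castLE k.isLt.le j)) ≤
      (K : ℝ)⁻¹ * ∑ k ∈ range K, 𝔼 ω, F (Y k ω) := by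
  have hjensen : ∀ p : Fin K → E, F ((K : ℝ)⁻¹ • ∑ k, p k) ≤ (K : ℝ)⁻¹ * ∑ k, F (p k) := by
    intro p
    have := hF.map_sum_le (t := univ) (w := fun _ => (K : ℝ)⁻¹) (p := p)
      (fun _ _ => by positivity) (by simp [(Nat.cast_pos.2 hK).ne']) (fun _ _ => Set.mem_univ _)
    simpa only [← smul_sum, smul_eq_mul, ← mul_sum] using this
  calc _ ≤ 𝔼 ω : Fin K → ι, (K : ℝ)⁻¹ * ∑ k : Fin K, F (Y k fun j => ω (Fin.castLE k.isLt.le j)) :=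
        expect_le_expect fun ω _ => hjensen _
    _ = (K : ℝ)⁻¹ * ∑ k : Fin K, 𝔼 ω : Fin K → ι, F (Y k fun j => ω (Fin.castLE k.isLt.le j)) := by
        rw [← mul_expect, expect_sum_comm]
    _ = (K : ℝ)⁻¹ * ∑ k ∈ range K, 𝔼 ω, F (Y k ω) := by
        rw [← Fin.sum_univ_eq_sum_range]
        exact congrArg _ (sum_congr rfl fun k _ => expect_comp_castLE k.isLt.le fun ω => F (Y k ω))

end RandomIterates

theorem stmt8_general {d n : ℕ} (hn : 0 < n)
    (f : Fin n → EuclideanSpace ℝ (Fin d) → ℝ)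
    (G : Fin n → EuclideanSpace ℝ (Fin d) → EuclideanSpace ℝ (Fin d))
    (hgrad : ∀ i x, HasGradientAt (f i) (G i x) x)
    (hconv : ∀ i x y, f i y ≥ f i x + ⟪G i x, y - x⟫)
    (L : Fin n → ℝ) (hL : ∀ i, 0 < L i)
    (hsmooth : ∀ i x y, ‖G i x - G i y‖ ≤ L i * ‖x - y‖)
    (fstar : Fin n → ℝ) (hfstar : ∀ i, IsGLB (Set.range (f i)) (fstar i))
    (F : EuclideanSpace ℝ (Fin d) → ℝ) (hF : ∀ x, F x = (1 / (n : ℝ)) * ∑ i, f i x)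
    (xstar : EuclideanSpace ℝ (Fin d))
    (σ2 : ℝ) (hσ2 : σ2 = F xstar - (1 / (n : ℝ)) * ∑ i, fstar i)
    (Lmax : ℝ) (hLmax : Lmax = Finset.univ.sup' ⟨⟨0, hn⟩, Finset.mem_univ _⟩ L)
    (γb : ℝ) (hγb : 0 < γb)
    (α : ℝ) (hα : α = min (1 / (2 * Lmax)) γb)
    (x0 : EuclideanSpace ℝ (Fin d))
    (Y : (k : ℕ) → (Fin k → Fin n) → EuclideanSpace ℝ (Fin d))
    (hY0 : ∀ ω, Y 0 ω = x0)
    (hYstep : ∀ (k : ℕ) (ω : Fin (k + 1) → Fin n),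
      Y (k + 1) ω =
        Y k (fun j => ω j.castSucc) -
          (min ((f (ω (Fin.last k)) (Y k (fun j => ω j.castSucc)) -
                  fstar (ω (Fin.last k))) /
              ‖G (ω (Fin.last k)) (Y k (fun j => ω j.castSucc))‖ ^ 2) γb) •
            G (ω (Fin.last k)) (Y k (fun j => ω j.castSucc))) :
    ∀ K : ℕ, 0 < K →
      (1 / (n : ℝ) ^ K) * ∑ ω : Fin K → Fin n,
          (F ((K : ℝ)⁻¹ • ∑ k : Fin K, Y k.val fun j => ω (Fin.castLE k.isLt.le j)) -
            F xstar) ≤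
        ‖x0 - xstar‖ ^ 2 / (α * K) + 2 * σ2 * γb / α := by
  intro K hK
  have : Nonempty (Fin n) := Fin.pos_iff_nonempty.mp hn
  have hmean : ∀ u : Fin n → ℝ, 𝔼 i, u i = 1 / (n : ℝ) * ∑ i, u i := fun u => by
    rw [Fintype.expect_eq_sum_div_card, Fintype.card_fin, div_eq_inv_mul, one_div]
  have hmean_seq : ∀ k (φ : (Fin k → Fin n) → ℝ), 𝔼 ω, φ ω = 1 / (n : ℝ) ^ k * ∑ ω, φ ω :=
    fun k φ => by
      rw [Fintype.expect_eq_sum_div_card, Fintype.card_fun, Fintype.card_fin, Fintype.card_fin,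
        div_eq_inv_mul, one_div, Nat.cast_pow]
  have hFexp : ∀ x, F x = 𝔼 i, f i x := fun x => by rw [hF, hmean]
  have hσ : σ2 = 𝔼 i, f i xstar - 𝔼 i, fstar i := by simp only [hσ2, hFexp, hmean]
  have hLmax_le : ∀ i, L i ≤ Lmax := fun i => hLmax ▸ le_sup' L (mem_univ i)
  have hα0 : 0 < α := hα ▸ lt_min (one_div_pos.2 (by linarith [hL ⟨0, hn⟩, hLmax_le ⟨0, hn⟩])) hγb
  have hαi : ∀ i, α ≤ min (1 / (2 * L i)) γb := fun i => hα ▸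
    min_le_min (one_div_le_one_div_of_le (by linarith [hL i]) (by linarith [hLmax_le i])) le_rfl
  have hstep : ∀ x, α * (F x - F xstar) +
      𝔼 i, ‖x - polyakStepMax (f i) (G i) (fstar i) γb x • G i x - xstar‖ ^ 2 ≤
        ‖x - xstar‖ ^ 2 + 2 * γb * σ2 := by
    intro x
    rw [hFexp, hFexp, hσ]
    exact expect_polyakStepMax_descent hgrad hsmooth hL hconv hfstar hα0.le hαi x xstar
  have hdescent := sum_expect_iterate_le
    (fun i x => x - polyakStepMax (f i) (G i) (fstar i) γb x • G i x) Y x0 hY0 hYstep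
    (fun x => α * (F x - F xstar)) (fun x => ‖x - xstar‖ ^ 2) _ (fun _ => sq_nonneg _) hstep K
  have hFconv : ConvexOn ℝ Set.univ F := by
    rw [funext hFexp]
    exact convexOn_expect fun i => convexOn_univ_of_le_add_inner (hconv i)
  have hjensen := hFconv.expect_map_average_le Y hK
  simp only [← mul_expect, expect_sub_distrib, Fintype.expect_const, ← mul_sum, sum_sub_distrib,
    sum_const, card_range, nsmul_eq_mul] at hdescent
  rw [← hmean_seq, expect_sub_distrib, Fintype.expect_const]
  have hK' : (0 : ℝ) < K := Nat.cast_pos.2 hK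
  calc _ ≤ (K : ℝ)⁻¹ * ∑ k ∈ range K, 𝔼 ω, F (Y k ω) - F xstar := by linarith
    _ = α * (∑ k ∈ range K, 𝔼 ω, F (Y k ω) - K * F xstar) / (α * K) := by field_simp
    _ ≤ (‖x0 - xstar‖ ^ 2 + K * (2 * γb * σ2)) / (α * K) := by gcongr
    _ = ‖x0 - xstar‖ ^ 2 / (α * K) + 2 * σ2 * γb / α := by field_simp

/-- SGD with `SPS_max` (`c = 1`) for convex smooth `f_i`:
`E[f(x̄^K) − f(x*)] ≤ ‖x^0 − x*‖²/(αK) + 2σ²γ_b/α`, where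
`α = min{1/(2L_max), γ_b}` and `x̄^K` is the average of the first `K` iterates. -/
theorem stmt8 {d n : ℕ} (hn : 0 < n)
    (f : Fin n → EuclideanSpace ℝ (Fin d) → ℝ)
    (G : Fin n → EuclideanSpace ℝ (Fin d) → EuclideanSpace ℝ (Fin d))
    (hgrad : ∀ i x, HasGradientAt (f i) (G i x) x)
    (hconv : ∀ i x y, f i y ≥ f i x + ⟪G i x, y - x⟫)
    (L : Fin n → ℝ) (hL : ∀ i, 0 < L i)
    (hsmooth : ∀ i x y, ‖G i x - G i y‖ ≤ L i * ‖x - y‖)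
    (fstar : Fin n → ℝ) (hfstar : ∀ i, IsGLB (Set.range (f i)) (fstar i))
    (F : EuclideanSpace ℝ (Fin d) → ℝ) (hF : ∀ x, F x = (1 / (n : ℝ)) * ∑ i, f i x)
    (xstar : EuclideanSpace ℝ (Fin d)) (hxstar : ∀ y, F xstar ≤ F y)
    (σ2 : ℝ) (hσ2 : σ2 = F xstar - (1 / (n : ℝ)) * ∑ i, fstar i)
    (Lmax : ℝ) (hLmax : Lmax = Finset.univ.sup' ⟨⟨0, hn⟩, Finset.mem_univ _⟩ L)
    (γb : ℝ) (hγb : 0 < γb)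
    (α : ℝ) (hα : α = min (1 / (2 * Lmax)) γb)
    (x0 : EuclideanSpace ℝ (Fin d))
    (Y : (k : ℕ) → (Fin k → Fin n) → EuclideanSpace ℝ (Fin d))
    (hY0 : ∀ ω, Y 0 ω = x0)
    (hYstep : ∀ (k : ℕ) (ω : Fin (k + 1) → Fin n),
      Y (k + 1) ω =
        Y k (fun j => ω j.castSucc) -
          (min ((f (ω (Fin.last k)) (Y k (fun j => ω j.castSucc)) -
                  fstar (ω (Fin.last k))) /
              ‖G (ω (Fin.last k)) (Y k (fun j => ω j.castSucc))‖ ^ 2) γb) •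
            G (ω (Fin.last k)) (Y k (fun j => ω j.castSucc))) :
    ∀ K : ℕ, 0 < K →
      (1 / (n : ℝ) ^ K) * ∑ ω : Fin K → Fin n,
          (F ((K : ℝ)⁻¹ • ∑ k : Fin K, Y k.val fun j => ω (Fin.castLE k.isLt.le j)) -
            F xstar) ≤
        ‖x0 - xstar‖ ^ 2 / (α * K) + 2 * σ2 * γb / α :=
  stmt8_general hn f G hgrad hconv L hL hsmooth fstar hfstar F hF xstar σ2 hσ2 Lmax hLmax γb hγb α
    hα x0 Y hY0 hYstep
end

section
/- One-step inequality for SPS_max with c > 1/2 in the convex case: for x^{k+1} = x^k − γ_k∇f_i(x^k) with γ_k = min{(f_i(x^k)−f_i*)/(c‖∇f_i(x^k)‖²), γ_b} and f_i convex, ‖x^{k+1} − x*‖² ≤ ‖x^k − x*‖² − γ_k(2 − 1/c)(f_i(x^k) − f_i*) + 2γ_k(f_i(x*) − f_i*). -/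
open scoped RealInnerProductSpace

/-
Expanding the square, `‖x - γ g - y‖² = ‖x - y‖² - 2γ⟪g, x - y⟫ + γ²‖g‖²`. The subgradient
inequality bounds `⟪g, x - y⟫` below by `f x - f y`, and the step-size condition bounds the
quadratic term by `(γ/c)(f x - f*)`; regrouping around `f*` gives the claim.
-/

section GradientStep

variable {E : Type*} [NormedAddCommGroup E] [InnerProductSpace ℝ E]

theorem norm_sub_smul_sub_sq (x y g : E) (γ : ℝ) :
    ‖x - γ • g - y‖ ^ 2 = ‖x - y‖ ^ 2 - 2 * γ * ⟪g, x - y⟫ + γ ^ 2 * ‖g‖ ^ 2 := by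
  rw [sub_right_comm, norm_sub_sq_real, real_inner_smul_right, real_inner_comm, norm_smul,
    Real.norm_eq_abs, mul_pow, sq_abs]
  ring

theorem sub_le_inner_of_subgradient {f : E → ℝ} {x y g : E}
    (hsub : f x + ⟪g, y - x⟫ ≤ f y) : f x - f y ≤ ⟪g, x - y⟫ := by
  rw [← neg_sub x y, inner_neg_right] at hsub
  linarith

theorem norm_gradient_step_sub_sq_le {f : E → ℝ} {x y g : E} {γ c fstar : ℝ}
    (hsub : f x + ⟪g, y - x⟫ ≤ f y) (hγ : 0 ≤ γ)
    (hquad : γ ^ 2 * ‖g‖ ^ 2 ≤ γ / c * (f x - fstar)) :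
    ‖x - γ • g - y‖ ^ 2 ≤
      ‖x - y‖ ^ 2 - γ * (2 - 1 / c) * (f x - fstar) + 2 * γ * (f y - fstar) := by
  have hinner : 2 * γ * (f x - f y) ≤ 2 * γ * ⟪g, x - y⟫ :=
    mul_le_mul_of_nonneg_left (sub_le_inner_of_subgradient hsub) (by positivity)
  calc ‖x - γ • g - y‖ ^ 2
      ≤ ‖x - y‖ ^ 2 - 2 * γ * (f x - f y) + γ / c * (f x - fstar) := by
        rw [norm_sub_smul_sub_sq]; linarith
    _ = ‖x - y‖ ^ 2 - γ * (2 - 1 / c) * (f x - fstar) + 2 * γ * (f y - fstar) := by ring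

end GradientStep

theorem stmt9_general {d : ℕ} (fi : EuclideanSpace ℝ (Fin d) → ℝ)
    (Gi : EuclideanSpace ℝ (Fin d) → EuclideanSpace ℝ (Fin d))
    (hconv : ∀ x y, fi y ≥ fi x + ⟪Gi x, y - x⟫)
    (fistar : ℝ) (hfistar : IsGLB (Set.range fi) fistar)
    (c γb : ℝ) (hc : 1 / 2 < c) (hγb : 0 < γb)
    (xstar xk : EuclideanSpace ℝ (Fin d))
    (γk : ℝ) (hγk : γk = min ((fi xk - fistar) / (c * ‖Gi xk‖ ^ 2)) γb)
    (hγquad : γk ^ 2 * ‖Gi xk‖ ^ 2 ≤ (γk / c) * (fi xk - fistar))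
    (xnext : EuclideanSpace ℝ (Fin d)) (hxnext : xnext = xk - γk • Gi xk) :
    ‖xnext - xstar‖ ^ 2 ≤
      ‖xk - xstar‖ ^ 2 - γk * (2 - 1 / c) * (fi xk - fistar) +
        2 * γk * (fi xstar - fistar) := by
  have hgap : 0 ≤ fi xk - fistar := sub_nonneg.mpr (hfistar.1 ⟨xk, rfl⟩)
  have hγk_nonneg : 0 ≤ γk := by
    rw [hγk]
    exact le_min (div_nonneg hgap (mul_nonneg (by linarith) (sq_nonneg _))) hγb.le
  rw [hxnext]
  exact norm_gradient_step_sub_sq_le (hconv xk xstar) hγk_nonneg hγquad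

/-- One-step inequality for `SPS_max` with `c > 1/2` in the convex case:
`‖x^{k+1} − x*‖² ≤ ‖x^k − x*‖² − γ_k(2 − 1/c)(f_i(x^k) − f_i*) + 2γ_k(f_i(x*) − f_i*)`. -/
theorem stmt9 {d : ℕ} (fi : EuclideanSpace ℝ (Fin d) → ℝ)
    (Gi : EuclideanSpace ℝ (Fin d) → EuclideanSpace ℝ (Fin d))
    (hgrad : ∀ x, HasGradientAt fi (Gi x) x)
    (hconv : ∀ x y, fi y ≥ fi x + ⟪Gi x, y - x⟫)
    (fistar : ℝ) (hfistar : IsGLB (Set.range fi) fistar)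
    (c γb : ℝ) (hc : 1 / 2 < c) (hγb : 0 < γb)
    (xstar xk : EuclideanSpace ℝ (Fin d)) (hGxk : Gi xk ≠ 0)
    (γk : ℝ) (hγk : γk = min ((fi xk - fistar) / (c * ‖Gi xk‖ ^ 2)) γb)
    (hγquad : γk ^ 2 * ‖Gi xk‖ ^ 2 ≤ (γk / c) * (fi xk - fistar))
    (xnext : EuclideanSpace ℝ (Fin d)) (hxnext : xnext = xk - γk • Gi xk) :
    ‖xnext - xstar‖ ^ 2 ≤
      ‖xk - xstar‖ ^ 2 - γk * (2 - 1 / c) * (fi xk - fistar) +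
        2 * γk * (fi xstar - fistar) :=
  stmt9_general fi Gi hconv fistar hfistar c γb hc hγb xstar xk γk hγk hγquad xnext hxnext
end

section
/- Sketch-and-project convergence with exact line-search step: if f_S satisfies f_S(x) = (1/2)⟨∇f_S(x), x − x*⟩ for all x (where x* is the projection of x onto the solution set), and f(x) = E_S f_S(x) satisfies the quadratic growth (λ_min⁺(W)/2)‖x − x*‖² ≤ f(x), then the iterates x^{k+1} = x^k − γ_k∇f_{S_k}(x^k) with γ_k = ⟨x^k − x*, ∇f_{S_k}(x^k)⟩/‖∇f_{S_k}(x^k)‖² satisfy E‖x^k − x*‖² ≤ (1 − λ_min⁺(W))^k‖x^0 − x*‖². -/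
/-!
Since `f_S(x)` is both `½⟨∇f_S(x), x − x*⟩` and `½‖∇f_S(x)‖²`, the exact line-search step
moves `x` by exactly `∇f_S(x)`, and expanding the square gives
`‖x⁺ − x*‖² = ‖x − x*‖² − 2 f_S(x)`. Averaging over `S` and using quadratic growth,
`E_S ‖x⁺ − x*‖² ≤ (1 − λ) ‖x − x*‖²`; conditioning on the first `k` samples turns this
into a geometric recursion for `E ‖x^k − x*‖²`.
-/

open scoped RealInnerProductSpace BigOperators
open Finset

-- Unlike `le_geom`, `c` may be negative: then `0 ≤ u (k + 1) ≤ c * u k` forces `u = 0`.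
theorem le_geom_of_nonneg {u : ℕ → ℝ} {c : ℝ} (hu : ∀ k, 0 ≤ u k)
    (h : ∀ k, u (k + 1) ≤ c * u k) (n : ℕ) : u n ≤ c ^ n * u 0 := by
  rcases le_or_gt 0 c with hc | hc
  · exact le_geom hc n fun k _ => h k
  · have hzero : ∀ k, u k = 0 := fun k =>
      le_antisymm (nonpos_of_mul_nonneg_right ((hu (k + 1)).trans (h k)) hc) (hu k)
    simp [hzero]

section Expect

variable {α : Type*} [Fintype α]

theorem Fintype.expect_fin_snoc {M : Type*} [AddCommMonoid M] [Module ℚ≥0 M] {k : ℕ}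
    (f : (Fin (k + 1) → α) → M) :
    𝔼 ω, f ω = 𝔼 ω : Fin k → α, 𝔼 s, f (Fin.snoc ω s) := by
  rw [← Fintype.expect_equiv (Fin.snocEquiv fun _ => α) (fun p => f (Fin.snoc p.2 p.1)) f
    fun _ => rfl, ← univ_product_univ, expect_product, expect_comm]

theorem expect_le_mul_expect_of_snoc {β : Type*} {φ : β → ℝ} {T : α → β → β} {c : ℝ}
    (hT : ∀ x, 𝔼 s, φ (T s x) ≤ c * φ x) {k : ℕ} {Y : (Fin k → α) → β}
    {Y' : (Fin (k + 1) → α) → β} (hY' : ∀ ω s, Y' (Fin.snoc ω s) = T s (Y ω)) :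
    𝔼 ω, φ (Y' ω) ≤ c * 𝔼 ω, φ (Y ω) := by
  rw [Fintype.expect_fin_snoc, mul_expect]
  exact expect_le_expect fun ω _ => by simpa only [hY'] using hT (Y ω)

end Expect

section Polyak

variable {E : Type*} [NormedAddCommGroup E] [InnerProductSpace ℝ E]

-- At `g = 0` the step size is `0 / 0 = 0`, so the step leaves `x` fixed.
noncomputable def polyakStep (xstar g x : E) : E := x - (⟪x - xstar, g⟫ / ‖g‖ ^ 2) • g

theorem norm_polyakStep_sub_sq {xstar g x : E} (h : ⟪g, x - xstar⟫ = ‖g‖ ^ 2) :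
    ‖polyakStep xstar g x - xstar‖ ^ 2 = ‖x - xstar‖ ^ 2 - ‖g‖ ^ 2 := by
  rcases eq_or_ne g 0 with rfl | hg
  · simp [polyakStep]
  have hcoeff : ⟪x - xstar, g⟫ / ‖g‖ ^ 2 = 1 := by
    rw [real_inner_comm, h]
    exact div_self (by positivity)
  rw [polyakStep, hcoeff, one_smul, sub_right_comm, norm_sub_sq_real, real_inner_comm, h]
  ring

theorem expect_norm_polyakStep_sub_sq_le {α : Type*} [Fintype α] [Nonempty α] {G : α → E}
    {xstar x : E} {lam : ℝ} (hG : ∀ s, ⟪G s, x - xstar⟫ = ‖G s‖ ^ 2)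
    (hgrowth : lam * ‖x - xstar‖ ^ 2 ≤ 𝔼 s, ‖G s‖ ^ 2) :
    𝔼 s, ‖polyakStep xstar (G s) x - xstar‖ ^ 2 ≤ (1 - lam) * ‖x - xstar‖ ^ 2 := by
  rw [expect_congr rfl fun s _ => norm_polyakStep_sub_sq (hG s), expect_sub_distrib,
    Fintype.expect_const]
  linarith

end Polyak

theorem stmt16_general {d m : ℕ} (hm : 0 < m)
    (fS : Fin m → EuclideanSpace ℝ (Fin d) → ℝ)
    (GS : Fin m → EuclideanSpace ℝ (Fin d) → EuclideanSpace ℝ (Fin d))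
    (xstar : EuclideanSpace ℝ (Fin d))
    (hid1 : ∀ s x, fS s x = (1 / 2) * ⟪GS s x, x - xstar⟫)
    (hid2 : ∀ s x, fS s x = (1 / 2) * ‖GS s x‖ ^ 2)
    (F : EuclideanSpace ℝ (Fin d) → ℝ)
    (hF : ∀ x, F x = (1 / (m : ℝ)) * ∑ s, fS s x)
    (lamW : ℝ)
    (hgrowth : ∀ x, lamW / 2 * ‖x - xstar‖ ^ 2 ≤ F x)
    (x0 : EuclideanSpace ℝ (Fin d))
    (Y : (k : ℕ) → (Fin k → Fin m) → EuclideanSpace ℝ (Fin d))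
    (hY0 : ∀ ω, Y 0 ω = x0)
    (hYstep : ∀ (k : ℕ) (ω : Fin (k + 1) → Fin m),
      Y (k + 1) ω =
        Y k (fun j => ω j.castSucc) -
          ((⟪Y k (fun j => ω j.castSucc) - xstar,
              GS (ω (Fin.last k)) (Y k (fun j => ω j.castSucc))⟫ : ℝ) /
            ‖GS (ω (Fin.last k)) (Y k (fun j => ω j.castSucc))‖ ^ 2) •
            GS (ω (Fin.last k)) (Y k (fun j => ω j.castSucc))) :
    ∀ k : ℕ, (1 / (m : ℝ) ^ k) * ∑ ω : Fin k → Fin m, ‖Y k ω - xstar‖ ^ 2 ≤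
      (1 - lamW) ^ k * ‖x0 - xstar‖ ^ 2 := by
  have : Nonempty (Fin m) := ⟨⟨0, hm⟩⟩
  have hG : ∀ s x, ⟪GS s x, x - xstar⟫ = ‖GS s x‖ ^ 2 := fun s x => by
    linarith [hid1 s x, hid2 s x]
  have hF_expect : ∀ x, F x = (𝔼 s, ‖GS s x‖ ^ 2) / 2 := fun x => by
    rw [hF, Fintype.expect_eq_sum_div_card, Fintype.card_fin]
    simp only [hid2, ← mul_sum]
    ring
  have hY_snoc : ∀ k ω s, Y (k + 1) (Fin.snoc ω s) = polyakStep xstar (GS s (Y k ω)) (Y k ω) :=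
    fun k ω s => by rw [hYstep]; simp only [Fin.snoc_castSucc, Fin.snoc_last]; rfl
  have hY0_expect : 𝔼 ω : Fin 0 → Fin m, ‖Y 0 ω - xstar‖ ^ 2 = ‖x0 - xstar‖ ^ 2 := by
    simp only [hY0, Fintype.expect_const]
  intro k
  have hmean : (1 / (m : ℝ) ^ k) * ∑ ω : Fin k → Fin m, ‖Y k ω - xstar‖ ^ 2
      = 𝔼 ω, ‖Y k ω - xstar‖ ^ 2 := by
    rw [Fintype.expect_eq_sum_div_card, Fintype.card_fun, Fintype.card_fin, Fintype.card_fin,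
      Nat.cast_pow, one_div_mul_eq_div]
  rw [hmean, ← hY0_expect]
  refine le_geom_of_nonneg (u := fun k => 𝔼 ω, ‖Y k ω - xstar‖ ^ 2)
    (fun k => expect_nonneg fun ω _ => sq_nonneg _) (fun k => ?_) k
  refine expect_le_mul_expect_of_snoc (φ := fun x => ‖x - xstar‖ ^ 2)
    (T := fun s x => polyakStep xstar (GS s x) x) (fun x => ?_) (hY_snoc k)
  exact expect_norm_polyakStep_sub_sq_le (hG · x) (by linarith [hgrowth x, hF_expect x])

/-- Sketch-and-project convergence with the exact line-search (Polyak) step: if each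
`f_S` satisfies `f_S(x) = (1/2)⟨∇f_S(x), x − x*⟩ = (1/2)‖∇f_S(x)‖²` and
`f = E_S f_S` satisfies the quadratic growth `(λ⁺_min(W)/2)‖x − x*‖² ≤ f(x)`, then
the iterates with `γ_k = ⟨x^k − x*, ∇f_{S_k}(x^k)⟩/‖∇f_{S_k}(x^k)‖²` satisfy
`E‖x^k − x*‖² ≤ (1 − λ⁺_min(W))^k ‖x^0 − x*‖²`. -/
theorem stmt16 {d m : ℕ} (hm : 0 < m)
    (fS : Fin m → EuclideanSpace ℝ (Fin d) → ℝ)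
    (GS : Fin m → EuclideanSpace ℝ (Fin d) → EuclideanSpace ℝ (Fin d))
    (hgrad : ∀ s x, HasGradientAt (fS s) (GS s x) x)
    (xstar : EuclideanSpace ℝ (Fin d))
    (hid1 : ∀ s x, fS s x = (1 / 2) * ⟪GS s x, x - xstar⟫)
    (hid2 : ∀ s x, fS s x = (1 / 2) * ‖GS s x‖ ^ 2)
    (F : EuclideanSpace ℝ (Fin d) → ℝ)
    (hF : ∀ x, F x = (1 / (m : ℝ)) * ∑ s, fS s x)
    (lamW : ℝ) (hlam : 0 < lamW)
    (hgrowth : ∀ x, lamW / 2 * ‖x - xstar‖ ^ 2 ≤ F x)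
    (x0 : EuclideanSpace ℝ (Fin d))
    (Y : (k : ℕ) → (Fin k → Fin m) → EuclideanSpace ℝ (Fin d))
    (hY0 : ∀ ω, Y 0 ω = x0)
    (hYstep : ∀ (k : ℕ) (ω : Fin (k + 1) → Fin m),
      Y (k + 1) ω =
        Y k (fun j => ω j.castSucc) -
          ((⟪Y k (fun j => ω j.castSucc) - xstar,
              GS (ω (Fin.last k)) (Y k (fun j => ω j.castSucc))⟫ : ℝ) /
            ‖GS (ω (Fin.last k)) (Y k (fun j => ω j.castSucc))‖ ^ 2) •
            GS (ω (Fin.last k)) (Y k (fun j => ω j.castSucc))) :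
    ∀ k : ℕ, (1 / (m : ℝ) ^ k) * ∑ ω : Fin k → Fin m, ‖Y k ω - xstar‖ ^ 2 ≤
      (1 - lamW) ^ k * ‖x0 - xstar‖ ^ 2 :=
  stmt16_general hm fS GS xstar hid1 hid2 F hF lamW hgrowth x0 Y hY0 hYstep
end

section
/- Stochastic subgradient method with SPS for nonsmooth convex functions under interpolation: if f_i are convex with uniformly bounded subgradients ‖g_i(x)‖ ≤ G, interpolation holds (f_i(x*) = f_i* = f(x*) for all i, where x* minimizes f), and γ_k = (f_i(x^k) − f_i(x*))/‖g_i^k‖², then E[f(x̄^K) − f(x*)] ≤ G‖x^0 − x*‖/√K, where x̄^K = (1/K)Σ_{k<K} x^k. -/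
/-!
Interpolation gives `f_i(x*) ≤ f_i(x)` for all `x`, so `x*` lies in the halfspace cut out by the subgradient
inequality at `x^k`, and the Polyak step decreases `‖x^k - x*‖²` by at least
`(f_{i_k}(x^k) - f_{i_k}(x*))² / G²`. Telescoping and Cauchy–Schwarz bound the sum of these sampled
gaps by `√K · G‖x^0 - x*‖` along every sample path. Since `x^k` does not depend on `i_k`, the
expected sampled gap equals `E[F(x^k) - F(x*)]`, and Jensen's inequality (through a subgradient of
`F` at the averaged iterate) passes to `x̄^K`.
-/

open scoped RealInnerProductSpace

lemma Fin.sum_castSucc_sub_succ {M : Type*} [AddCommGroup M] {K : ℕ} (u : Fin (K + 1) → M) :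
    ∑ k : Fin K, (u k.castSucc - u k.succ) = u 0 - u (Fin.last K) := by
  induction K with
  | zero => simp
  | succ K ih =>
    rw [Fin.sum_univ_castSucc]
    simp only [Fin.succ_castSucc]
    rw [ih (fun k => u k.castSucc), Fin.succ_last]
    simp

lemma Fintype.sum_le_sqrt_card_mul_of_sum_sq_le {ι : Type*} [Fintype ι] {a : ι → ℝ} {C : ℝ}
    (hC : 0 ≤ C) (h : ∑ k, a k ^ 2 ≤ C ^ 2) :
    ∑ k, a k ≤ √(Fintype.card ι) * C := by
  have hcs : (∑ k, a k) ^ 2 ≤ Fintype.card ι * C ^ 2 :=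
    (sq_sum_le_card_mul_sum_sq (s := Finset.univ) (f := a)).trans
      (mul_le_mul_of_nonneg_left h (Nat.cast_nonneg _))
  calc ∑ k, a k ≤ |∑ k, a k| := le_abs_self _
    _ ≤ √(Fintype.card ι * C ^ 2) := Real.abs_le_sqrt hcs
    _ = √(Fintype.card ι) * C := by rw [Real.sqrt_mul (Nat.cast_nonneg _), Real.sqrt_sq hC]

lemma Fintype.sum_sum_eq_card_smul_sum_apply {ι α M : Type*} [Fintype ι] [DecidableEq ι]
    [Fintype α] [AddCommMonoid M] (A : (ι → α) → α → M) (p : ι)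
    (hA : ∀ ω a, A (Function.update ω p a) = A ω) :
    ∑ ω, ∑ a, A ω a = Fintype.card α • ∑ ω, A ω (ω p) := by
  let swap : (ι → α) × α ≃ (ι → α) × α :=
    { toFun q := (Function.update q.1 p q.2, q.1 p)
      invFun q := (Function.update q.1 p q.2, q.1 p)
      left_inv := fun ⟨ω, a⟩ => by simp
      right_inv := fun ⟨ω, a⟩ => by simp }
  calc ∑ ω, ∑ a, A ω a = ∑ q : (ι → α) × α, A q.1 q.2 :=
      (Fintype.sum_prod_type fun q => A q.1 q.2).symm
    _ = ∑ q : (ι → α) × α, A q.1 (q.1 p) :=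
      Fintype.sum_equiv swap _ _ fun ⟨ω, a⟩ => by
        change A ω a = A (Function.update ω p a) (Function.update ω p a p)
        rw [hA, Function.update_self]
    _ = Fintype.card α • ∑ ω, A ω (ω p) := by
      rw [Fintype.sum_prod_type, Finset.sum_comm]
      simp

section Subgradient

variable {E : Type*} [NormedAddCommGroup E] [InnerProductSpace ℝ E]

def IsSubgradientAt (φ : E → ℝ) (g x : E) : Prop :=
  ∀ y, φ x + ⟪g, y - x⟫ ≤ φ y

namespace IsSubgradientAt

variable {φ : E → ℝ} {g x : E}

lemma const_mul (h : IsSubgradientAt φ g x) {c : ℝ} (hc : 0 ≤ c) :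
    IsSubgradientAt (fun y => c * φ y) (c • g) x := fun y => by
  rw [real_inner_smul_left, ← mul_add]
  exact mul_le_mul_of_nonneg_left (h y) hc

lemma sum {ι : Type*} {s : Finset ι} {f : ι → E → ℝ} {g : ι → E}
    (h : ∀ i ∈ s, IsSubgradientAt (f i) (g i) x) :
    IsSubgradientAt (fun y => ∑ i ∈ s, f i y) (∑ i ∈ s, g i) x := fun y => by
  rw [sum_inner, ← Finset.sum_add_distrib]
  exact Finset.sum_le_sum fun i hi => h i hi y

lemma map_average_sub_le {ι : Type*} [Fintype ι] [Nonempty ι] {z : ι → E}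
    (h : IsSubgradientAt φ g ((Fintype.card ι : ℝ)⁻¹ • ∑ k, z k)) (c : ℝ) :
    φ ((Fintype.card ι : ℝ)⁻¹ • ∑ k, z k) - c ≤ (Fintype.card ι : ℝ)⁻¹ * ∑ k, (φ (z k) - c) := by
  set m := (Fintype.card ι : ℝ)⁻¹ • ∑ k, z k
  have hcard : (Fintype.card ι : ℝ) ≠ 0 := by positivity
  have hcentred : ∑ k, (z k - m) = 0 := by
    rw [Finset.sum_sub_distrib, Finset.sum_const, Finset.card_univ, ← Nat.cast_smul_eq_nsmul ℝ,
      smul_smul, mul_inv_cancel₀ hcard, one_smul, sub_self]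
  have hsum : ∑ k, (φ m - c + ⟪g, z k - m⟫) ≤ ∑ k, (φ (z k) - c) :=
    Finset.sum_le_sum fun k _ => by linarith [h (z k)]
  rw [Finset.sum_add_distrib, ← inner_sum, hcentred, inner_zero_right, add_zero,
    Finset.sum_const, Finset.card_univ, nsmul_eq_mul] at hsum
  rw [inv_mul_eq_div, le_div_iff₀ (by positivity)]
  linarith

end IsSubgradientAt

lemma norm_sub_polyakStep_sq_le {g x y : E} {Δ : ℝ} (hg : g ≠ 0) (hΔ : 0 ≤ Δ)
    (h : Δ ≤ ⟪g, x - y⟫) :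
    ‖x - (Δ / ‖g‖ ^ 2) • g - y‖ ^ 2 ≤ ‖x - y‖ ^ 2 - Δ ^ 2 / ‖g‖ ^ 2 := by
  have hg2 : 0 < ‖g‖ ^ 2 := by positivity
  set γ := Δ / ‖g‖ ^ 2
  have hγ : 0 ≤ γ := by positivity
  have hγg : γ * ‖g‖ ^ 2 = Δ := div_mul_cancel₀ Δ hg2.ne'
  have hexpand : ‖x - γ • g - y‖ ^ 2 = ‖x - y‖ ^ 2 - 2 * γ * ⟪g, x - y⟫ + γ ^ 2 * ‖g‖ ^ 2 := by
    rw [sub_right_comm, norm_sub_sq_real, real_inner_smul_right, real_inner_comm, norm_smul,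
      Real.norm_of_nonneg hγ]
    ring
  have hquot : Δ ^ 2 / ‖g‖ ^ 2 = γ * Δ := by rw [← hγg]; field_simp
  rw [hexpand, hquot]
  nlinarith [mul_le_mul_of_nonneg_left h hγ]

/-- Stated in product form so that `g = 0`, which forces `Δ = 0`, needs no separate case. -/
lemma sq_le_mul_norm_sub_polyakStep {g x y : E} {Δ G : ℝ} (hΔ : 0 ≤ Δ)
    (h : Δ ≤ ⟪g, x - y⟫) (hgG : ‖g‖ ≤ G) :
    Δ ^ 2 ≤ G ^ 2 * (‖x - y‖ ^ 2 - ‖x - (Δ / ‖g‖ ^ 2) • g - y‖ ^ 2) := by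
  rcases eq_or_ne g 0 with rfl | hg
  · have hΔ0 : Δ = 0 := le_antisymm (by simpa using h) hΔ
    simp [hΔ0]
  have hstep := norm_sub_polyakStep_sq_le hg hΔ h
  have hg2 : 0 < ‖g‖ ^ 2 := by positivity
  have hgG2 : ‖g‖ ^ 2 ≤ G ^ 2 := pow_le_pow_left₀ (norm_nonneg g) hgG 2
  calc Δ ^ 2 = ‖g‖ ^ 2 * (Δ ^ 2 / ‖g‖ ^ 2) := by field_simp
    _ ≤ G ^ 2 * (‖x - y‖ ^ 2 - ‖x - (Δ / ‖g‖ ^ 2) • g - y‖ ^ 2) :=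
      mul_le_mul hgG2 (by linarith) (by positivity) (by positivity)

lemma sum_polyak_gap_le {K : ℕ} {G : ℝ} (hG : 0 ≤ G) (φ : Fin K → E → ℝ) (g : Fin K → E)
    (x : Fin (K + 1) → E) (y : E) (hsub : ∀ k, IsSubgradientAt (φ k) (g k) (x k.castSucc))
    (hlow : ∀ k, φ k y ≤ φ k (x k.castSucc)) (hbound : ∀ k, ‖g k‖ ≤ G)
    (hstep : ∀ k, x k.succ =
      x k.castSucc - ((φ k (x k.castSucc) - φ k y) / ‖g k‖ ^ 2) • g k) :
    ∑ k, (φ k (x k.castSucc) - φ k y) ≤ √K * (G * ‖x 0 - y‖) := by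
  set Δ := fun k => φ k (x k.castSucc) - φ k y
  have hprogress : ∀ k, Δ k ^ 2 ≤ G ^ 2 * (‖x k.castSucc - y‖ ^ 2 - ‖x k.succ - y‖ ^ 2) := by
    intro k
    rw [hstep k]
    refine sq_le_mul_norm_sub_polyakStep (sub_nonneg.2 (hlow k)) ?_ (hbound k)
    have hk := hsub k y
    rw [← neg_sub, inner_neg_right] at hk
    linarith
  have hsq : ∑ k, Δ k ^ 2 ≤ (G * ‖x 0 - y‖) ^ 2 := calc
    ∑ k, Δ k ^ 2 ≤ ∑ k, G ^ 2 * (‖x k.castSucc - y‖ ^ 2 - ‖x k.succ - y‖ ^ 2) :=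
      Finset.sum_le_sum fun k _ => hprogress k
    _ = G ^ 2 * (‖x 0 - y‖ ^ 2 - ‖x (Fin.last K) - y‖ ^ 2) := by
      rw [← Finset.mul_sum, Fin.sum_castSucc_sub_succ fun k => ‖x k - y‖ ^ 2]
    _ ≤ (G * ‖x 0 - y‖) ^ 2 := by
      rw [mul_pow]
      nlinarith [sq_nonneg G, sq_nonneg ‖x (Fin.last K) - y‖]
  simpa using Fintype.sum_le_sqrt_card_mul_of_sum_sq_le (by positivity) hsq

end Subgradient

lemma sum_sub_eq_sum_sample_sub {E : Type*} {n K : ℕ} (hn : n ≠ 0) (f : Fin n → E → ℝ) (F : E → ℝ)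
    (hF : ∀ x, F x = 1 / (n : ℝ) * ∑ i, f i x) (y : E) (X : (Fin K → Fin n) → E) (k : Fin K)
    (hX : ∀ ω i, X (Function.update ω k i) = X ω) :
    ∑ ω, (F (X ω) - F y) = ∑ ω, (f (ω k) (X ω) - f (ω k) y) := by
  have hmarg := Fintype.sum_sum_eq_card_smul_sum_apply (fun ω i => f i (X ω) - f i y) k
    fun ω i => by simp only [hX]
  simp only [hF, ← mul_sub, ← Finset.sum_sub_distrib, ← Finset.mul_sum, hmarg, nsmul_eq_mul,
    Fintype.card_fin]
  field_simp

theorem stmt17_general {d n : ℕ} (hn : 0 < n)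
    (f : Fin n → EuclideanSpace ℝ (Fin d) → ℝ)
    (gsub : Fin n → EuclideanSpace ℝ (Fin d) → EuclideanSpace ℝ (Fin d))
    (hsub : ∀ i x y, f i y ≥ f i x + ⟪gsub i x, y - x⟫)
    (G : ℝ) (hG : 0 < G) (hbound : ∀ i x, ‖gsub i x‖ ≤ G)
    (F : EuclideanSpace ℝ (Fin d) → ℝ) (hF : ∀ x, F x = (1 / (n : ℝ)) * ∑ i, f i x)
    (xstar : EuclideanSpace ℝ (Fin d))
    (fstar : Fin n → ℝ) (hfstar : ∀ i, IsGLB (Set.range (f i)) (fstar i))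
    (hinterp : ∀ i, f i xstar = fstar i ∧ fstar i = F xstar)
    (x0 : EuclideanSpace ℝ (Fin d))
    (Y : (k : ℕ) → (Fin k → Fin n) → EuclideanSpace ℝ (Fin d))
    (hY0 : ∀ ω, Y 0 ω = x0)
    (hYstep : ∀ (k : ℕ) (ω : Fin (k + 1) → Fin n),
      Y (k + 1) ω =
        Y k (fun j => ω j.castSucc) -
          ((f (ω (Fin.last k)) (Y k (fun j => ω j.castSucc)) -
              f (ω (Fin.last k)) xstar) /
            ‖gsub (ω (Fin.last k)) (Y k (fun j => ω j.castSucc))‖ ^ 2) •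
            gsub (ω (Fin.last k)) (Y k (fun j => ω j.castSucc))) :
    ∀ K : ℕ, 0 < K →
      (1 / (n : ℝ) ^ K) * ∑ ω : Fin K → Fin n,
          (F ((K : ℝ)⁻¹ • ∑ k : Fin K, Y k.val fun j => ω (Fin.castLE k.isLt.le j)) -
            F xstar) ≤
        G * ‖x0 - xstar‖ / Real.sqrt K := by
  intro K hK
  set X : (Fin K → Fin n) → Fin (K + 1) → EuclideanSpace ℝ (Fin d) :=
    fun ω k => Y k fun j => ω (Fin.castLE k.is_le j)
  have hlow : ∀ i x, f i xstar ≤ f i x := fun i x => (hinterp i).1 ▸ (hfstar i).1 ⟨x, rfl⟩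
  have hsubF : ∀ x, IsSubgradientAt F ((1 / (n : ℝ)) • ∑ i, gsub i x) x := by
    intro x
    rw [show F = fun y => 1 / (n : ℝ) * ∑ i, f i y from funext hF]
    exact (IsSubgradientAt.sum fun i _ => hsub i x).const_mul (by positivity)
  have hgap : ∀ ω : Fin K → Fin n, ∑ k, (f (ω k) (X ω k.castSucc) - f (ω k) xstar)
      ≤ √K * (G * ‖x0 - xstar‖) := fun ω => by
    simpa [X, hY0] using sum_polyak_gap_le hG.le (fun k => f (ω k))
      (fun k => gsub (ω k) (X ω k.castSucc)) (X ω) xstar (fun k => hsub _ _)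
      (fun k => hlow _ _) (fun k => hbound _ _) fun k => hYstep k fun j => ω (Fin.castLE k.isLt j)
  -- `X ω k.castSucc` does not depend on the sample `ω k`, so averaging over it turns `f (ω k)`
  -- into `F`.
  have hmarg : ∀ k : Fin K, ∑ ω, (F (X ω k.castSucc) - F xstar)
      = ∑ ω, (f (ω k) (X ω k.castSucc) - f (ω k) xstar) := fun k =>
    sum_sub_eq_sum_sample_sub hn.ne' f F hF xstar (fun ω => X ω k.castSucc) k fun ω i =>
      congrArg (Y k) (funext fun j => Function.update_of_ne (Fin.ne_of_lt j.isLt) _ _)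
  have : Nonempty (Fin K) := Fin.pos_iff_nonempty.1 hK
  calc (1 / (n : ℝ) ^ K) * ∑ ω : Fin K → Fin n,
        (F ((K : ℝ)⁻¹ • ∑ k : Fin K, X ω k.castSucc) - F xstar)
      ≤ (1 / (n : ℝ) ^ K) * ∑ ω, (K : ℝ)⁻¹ * ∑ k : Fin K, (F (X ω k.castSucc) - F xstar) := by
        gcongr with ω
        simpa using (hsubF _).map_average_sub_le (z := fun k : Fin K => X ω k.castSucc) (F xstar)
    _ = (1 / (n : ℝ) ^ K) *
          ((K : ℝ)⁻¹ * ∑ ω, ∑ k : Fin K, (f (ω k) (X ω k.castSucc) - f (ω k) xstar)) := by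
        rw [← Finset.mul_sum, Finset.sum_comm, Finset.sum_congr rfl fun k _ => hmarg k,
          Finset.sum_comm]
    _ ≤ (1 / (n : ℝ) ^ K) * ((K : ℝ)⁻¹ * ∑ _ω : Fin K → Fin n, √K * (G * ‖x0 - xstar‖)) := by
        gcongr with ω
        exact hgap ω
    _ = G * ‖x0 - xstar‖ / √K := by
        have hK' : (0 : ℝ) < K := by exact_mod_cast hK
        rw [Finset.sum_const, Finset.card_univ, Fintype.card_fun, Fintype.card_fin,
          Fintype.card_fin, nsmul_eq_mul]
        push_cast
        field_simp
        rw [Real.sq_sqrt hK'.le]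

/-- Stochastic subgradient method with SPS for nonsmooth convex functions under
interpolation: with bounded subgradients `‖g_i(x)‖ ≤ G` and
`γ_k = (f_i(x^k) − f_i(x*))/‖g_i^k‖²`, one has
`E[f(x̄^K) − f(x*)] ≤ G‖x^0 − x*‖/√K`. -/
theorem stmt17 {d n : ℕ} (hn : 0 < n)
    (f : Fin n → EuclideanSpace ℝ (Fin d) → ℝ)
    (gsub : Fin n → EuclideanSpace ℝ (Fin d) → EuclideanSpace ℝ (Fin d))
    (hsub : ∀ i x y, f i y ≥ f i x + ⟪gsub i x, y - x⟫)
    (G : ℝ) (hG : 0 < G) (hbound : ∀ i x, ‖gsub i x‖ ≤ G)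
    (F : EuclideanSpace ℝ (Fin d) → ℝ) (hF : ∀ x, F x = (1 / (n : ℝ)) * ∑ i, f i x)
    (xstar : EuclideanSpace ℝ (Fin d)) (hxstar : ∀ y, F xstar ≤ F y)
    (fstar : Fin n → ℝ) (hfstar : ∀ i, IsGLB (Set.range (f i)) (fstar i))
    (hinterp : ∀ i, f i xstar = fstar i ∧ fstar i = F xstar)
    (hne : ∀ (i : Fin n) (x : EuclideanSpace ℝ (Fin d)),
      F x ≠ F xstar → gsub i x ≠ 0)
    (x0 : EuclideanSpace ℝ (Fin d))
    (Y : (k : ℕ) → (Fin k → Fin n) → EuclideanSpace ℝ (Fin d))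
    (hY0 : ∀ ω, Y 0 ω = x0)
    (hYstep : ∀ (k : ℕ) (ω : Fin (k + 1) → Fin n),
      Y (k + 1) ω =
        Y k (fun j => ω j.castSucc) -
          ((f (ω (Fin.last k)) (Y k (fun j => ω j.castSucc)) -
              f (ω (Fin.last k)) xstar) /
            ‖gsub (ω (Fin.last k)) (Y k (fun j => ω j.castSucc))‖ ^ 2) •
            gsub (ω (Fin.last k)) (Y k (fun j => ω j.castSucc))) :
    ∀ K : ℕ, 0 < K →
      (1 / (n : ℝ) ^ K) * ∑ ω : Fin K → Fin n,
          (F ((K : ℝ)⁻¹ • ∑ k : Fin K, Y k.val fun j => ω (Fin.castLE k.isLt.le j)) -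
            F xstar) ≤
        G * ‖x0 - xstar‖ / Real.sqrt K :=
  stmt17_general hn f gsub hsub G hG hbound F hF xstar fstar hfstar hinterp x0 Y hY0 hYstep
end

section
/- Minimizer of the regularized logistic 1-D problem via the 1-Lambert function: for c, λ > 0, the unique minimizer of g(α) = log(1 + e^{−αc}) + (λ/2)α² over α ∈ ℝ satisfies α + α e^{αc} = c/λ, i.e., letting W₁ denote the inverse of x ↦ xe^x + x on [0,∞), α* = (1/c)W₁(c²/λ). -/
/-!
The derivative `g' α = λα − c/(1 + e^{αc})` is strictly increasing, so `g` is strictly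
convex and its unique minimizer is the zero of `g'`, i.e. `λα(1 + e^{αc}) = c`. Substituting
`x = αc` turns this into `xe^x + x = c²/λ`; its nonnegative solution exists by the
intermediate value theorem and is `W₁(c²/λ)`.
-/

open Real Set

theorem lt_of_strictMono_of_hasDerivAt {f f' : ℝ → ℝ} {a x : ℝ}
    (hf : ∀ y, HasDerivAt f (f' y) y) (hf' : StrictMono f') (ha : f' a = 0) (hx : x ≠ a) :
    f a < f x := by
  have hcont : Continuous f := continuous_iff_continuousAt.2 fun y => (hf y).continuousAt
  rcases hx.lt_or_gt with hxa | hax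
  · obtain ⟨ξ, ⟨-, hξa⟩, hξ⟩ :=
      exists_hasDerivAt_eq_slope f f' hxa hcont.continuousOn fun y _ => hf y
    have : (f a - f x) / (a - x) < 0 := hξ ▸ ha ▸ hf' hξa
    linarith [(div_neg_iff.1 this).resolve_left fun h => by linarith [h.2]]
  · obtain ⟨ξ, ⟨haξ, -⟩, hξ⟩ :=
      exists_hasDerivAt_eq_slope f f' hax hcont.continuousOn fun y _ => hf y
    have : 0 < (f x - f a) / (x - a) := hξ ▸ ha ▸ hf' haξ
    linarith [(div_pos_iff.1 this).resolve_right fun h => by linarith [h.2]]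

theorem exists_nonneg_mul_exp_add_eq {y : ℝ} (hy : 0 ≤ y) : ∃ x, 0 ≤ x ∧ x * exp x + x = y := by
  have hcont : ContinuousOn (fun x => x * exp x + x) (Icc 0 y) := by fun_prop
  obtain ⟨x, hx, hxy⟩ := intermediate_value_Icc hy hcont
    ⟨by simpa using hy, by nlinarith [mul_nonneg hy (exp_pos y).le]⟩
  exact ⟨x, hx.1, hxy⟩

theorem hasDerivAt_log_one_add_exp_neg_mul (c α : ℝ) :
    HasDerivAt (fun α => log (1 + exp (-α * c))) (-c / (1 + exp (α * c))) α := by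
  have hexp : HasDerivAt (fun α => exp (-α * c)) (-c * exp (-α * c)) α := by
    simpa [mul_comm] using ((hasDerivAt_neg α).mul_const c).exp
  convert (hexp.const_add 1).log (by positivity) using 1
  rw [neg_mul, neg_mul, exp_neg]
  field_simp
  ring

theorem strictMono_mul_sub_div_one_add_exp {lam c : ℝ} (hlam : 0 < lam) (hc : 0 ≤ c) :
    StrictMono fun α => lam * α - c / (1 + exp (α * c)) := by
  refine (strictMono_mul_left_of_pos hlam).add_monotone fun α β hαβ => ?_
  simp only [neg_le_neg_iff]
  gcongr

/-- Minimizer of the regularized logistic 1-D problem via the 1-Lambert function: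
for `c, λ > 0`, the minimizer `α*` of `g(α) = log(1 + e^{−αc}) + (λ/2)α²` is unique,
satisfies `α* + α* e^{α*c} = c/λ`, and equals `(1/c)W₁(c²/λ)`, where `W₁` is the
inverse of `x ↦ xe^x + x` on `[0, ∞)`. -/
theorem stmt18 (c lam : ℝ) (hc : 0 < c) (hlam : 0 < lam)
    (g : ℝ → ℝ) (hg : ∀ α, g α = Real.log (1 + Real.exp (-α * c)) + lam / 2 * α ^ 2)
    (W1 : ℝ → ℝ) (hW1 : ∀ x, 0 ≤ x → W1 (x * Real.exp x + x) = x) :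
    (∃! a : ℝ, ∀ α, g a ≤ g α) ∧
      ∀ a : ℝ, (∀ α, g a ≤ g α) →
        a + a * Real.exp (a * c) = c / lam ∧ a = (1 / c) * W1 (c ^ 2 / lam) := by
  obtain ⟨x₀, hx₀, hx₀_eq⟩ := exists_nonneg_mul_exp_add_eq (by positivity : 0 ≤ c ^ 2 / lam)
  obtain ⟨a₀, rfl⟩ : ∃ a₀, x₀ = a₀ * c := ⟨x₀ / c, (div_mul_cancel₀ x₀ hc.ne').symm⟩
  have hstat : a₀ + a₀ * exp (a₀ * c) = c / lam := by
    rw [eq_div_iff hlam.ne'] at hx₀_eq ⊢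
    apply mul_left_cancel₀ hc.ne'
    linear_combination hx₀_eq
  have hderiv (α : ℝ) : HasDerivAt g (lam * α - c / (1 + exp (α * c))) α := by
    rw [funext hg]
    refine ((hasDerivAt_log_one_add_exp_neg_mul c α).add
      ((hasDerivAt_pow 2 α).const_mul (lam / 2))).congr_deriv ?_
    push_cast
    ring
  have hcrit : lam * a₀ - c / (1 + exp (a₀ * c)) = 0 := by
    rw [sub_eq_zero, eq_div_iff (by positivity)]
    rw [eq_div_iff hlam.ne'] at hstat
    linear_combination hstat
  have hmin (α : ℝ) (hα : α ≠ a₀) : g a₀ < g α :=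
    lt_of_strictMono_of_hasDerivAt hderiv (strictMono_mul_sub_div_one_add_exp hlam hc.le) hcrit hα
  have huniq (a : ℝ) (ha : ∀ α, g a ≤ g α) : a = a₀ :=
    by_contra fun hne => (ha a₀).not_gt (hmin a hne)
  refine ⟨⟨a₀, fun α => ?_, huniq⟩, fun a ha => ?_⟩
  · rcases eq_or_ne α a₀ with rfl | hα
    exacts [le_rfl, (hmin α hα).le]
  · obtain rfl := huniq a ha
    refine ⟨hstat, ?_⟩
    rw [← hx₀_eq, hW1 _ hx₀]
    field_simp
end
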